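/- arXiv:math/0507343 — 6 statements merged into one kernel-verified Lean document; each statement's English description precedes it below -/
import Mathlib

section
/- Let (μ_N)_{N≥1} be probability measures, μ_N on Ω_N. If (μ_N) has a limit shape l under some scaling (r_N), then for every α ∈ (0,1), lim_{N→∞} μ_N{η ∈ Ω_N : q_N(η) > α·N} = 0; in particular (μ_N) does not exhibit gelation. -/
open scoped Classical BigOperators Topology
open Filter MeasureTheory ProbabilityTheory Finset

noncomputable section

/-- `pc η k` is `n_k(η)`, the number of parts of size `k` in the partition `η`. -/
def pc {N : ℕ} (η : Nat.Partition N) (k : ℕ) : ℕ := Multiset.count k η.parts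

/-- `qN η` is the size of the largest part of `η`. -/
def qN {N : ℕ} (η : Nat.Partition N) : ℕ := η.parts.sup

/-- `nuAbove η u = ν(u;η)`, the number of parts of `η` of size `≥ u`. -/
def nuAbove {N : ℕ} (η : Nat.Partition N) (u : ℝ) : ℕ :=
  Multiset.card (η.parts.filter (fun k => u ≤ (k : ℝ)))

/-- probability of the set of partitions satisfying `P` under the mass function `μ`. -/
def prob {N : ℕ} (μ : Nat.Partition N → ℝ) (P : Nat.Partition N → Prop) : ℝ :=
  ∑ η ∈ Finset.univ.filter P, μ η

/-- `μ` is a sequence of probability measures, `μ N` on the partitions of `N` (for `N ≥ 1`). -/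
def IsProbSeq (μ : ∀ N : ℕ, Nat.Partition N → ℝ) : Prop :=
  ∀ N : ℕ, 1 ≤ N → (∀ η : Nat.Partition N, 0 ≤ μ N η) ∧ (∑ η : Nat.Partition N, μ N η) = 1

/-- `l` is the limit shape of the sequence of measures `μ` under the scaling `r`:
`l` is a continuous nonincreasing nonnegative function on `[0,∞)` of total integral `1`,
`r N > 0`, `r N / N → 0`, and for all `0 < a < b`, `ε > 0`, the `μ N`-probability that
`sup_{u ∈ [a,b]} |(r N / N)·ν(r N · u) - l u| < ε` tends to `1`. -/
def HasLimitShape (μ : ∀ N : ℕ, Nat.Partition N → ℝ) (r : ℕ → ℝ) (l : ℝ → ℝ) : Prop :=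
  (∀ N : ℕ, 1 ≤ N → 0 < r N) ∧
  Tendsto (fun N : ℕ => r N / (N : ℝ)) atTop (𝓝 0) ∧
  ContinuousOn l (Set.Ici 0) ∧
  AntitoneOn l (Set.Ici 0) ∧
  (∀ u : ℝ, 0 ≤ u → 0 ≤ l u) ∧
  (∫ u in Set.Ioi (0:ℝ), l u) = 1 ∧
  (∀ a b ε : ℝ, 0 < a → a < b → 0 < ε →
    Tendsto (fun N : ℕ => prob (μ N) (fun η =>
        sSup ((fun u => |r N / (N : ℝ) * (nuAbove η (r N * u) : ℝ) - l u|) '' Set.Icc a b) < ε))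
      atTop (𝓝 1))

/-!
If `η` has a part `q > αN`, the other parts have total size `N - q < (1 - α)N`. A part `p` is
counted in `ν(r(i+1)a)` for at most `p / (ra)` indices `i`, so `ra · ∑_{i<m} ν(r(i+1)a)` is at most
`ram` (the part `q`, counted every time) plus `N - q`. On the event where `(r/N) ν(r·)` is
`ε`-close to `l` on `[a, (m+1)a]`, the same sum is at least `aN ∑_{i<m} (l((i+1)a) - ε)`, and since
`l` is nonincreasing, `a ∑_{i<m} l((i+1)a) ≥ ∫_a^{(m+1)a} l`, which is close to `∫ l = 1` for
suitable `a` and `m`. With `ε` and `r_N/N` small the two bounds are incompatible, so the large-part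
event lies in the complement of an event of probability tending to `1`.
-/

open Set

theorem Multiset.sup_mem_of_bot_lt {α : Type*} [LinearOrder α] [OrderBot α] {s : Multiset α}
    (h : ⊥ < s.sup) : s.sup ∈ s := by
  induction s using Multiset.induction_on with
  | empty => simp at h
  | cons a s ih =>
    rw [Multiset.sup_cons] at h ⊢
    rcases le_total s.sup a with hs | hs
    · rw [sup_eq_left.2 hs]; exact Multiset.mem_cons_self a s
    · rw [sup_eq_right.2 hs] at h ⊢; exact Multiset.mem_cons_of_mem (ih h)

theorem AntitoneOn.integral_le_mul_sum {f : ℝ → ℝ} {x₀ h : ℝ} {m : ℕ} (hh : 0 < h)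
    (hf : AntitoneOn f (Icc x₀ (x₀ + m * h))) :
    ∫ x in x₀..x₀ + m * h, f x ≤ h * ∑ i ∈ range m, f (x₀ + i * h) := by
  have hg : AntitoneOn (fun x => f (x₀ + h * x)) (Icc 0 (0 + m)) := by
    intro x hx y hy hxy
    have mem : ∀ z ∈ Icc (0 : ℝ) (0 + m), x₀ + h * z ∈ Icc x₀ (x₀ + m * h) := fun z hz =>
      ⟨by nlinarith [hz.1], by nlinarith [hz.2]⟩
    exact hf (mem x hx) (mem y hy) (by gcongr)
  calc ∫ x in x₀..x₀ + m * h, f x = h • ∫ x in 0..0 + m, f (x₀ + h * x) := by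
        rw [intervalIntegral.smul_integral_comp_add_mul]; simp [mul_comm]
    _ ≤ h * ∑ i ∈ range m, f (x₀ + h * (0 + i)) := by
        rw [smul_eq_mul]; gcongr; exact hg.integral_le_sum
    _ = h * ∑ i ∈ range m, f (x₀ + i * h) := by simp [mul_comm]

theorem exists_intervalIntegral_gt_of_lt_integral_Ioi {l : ℝ → ℝ} (hl : IntegrableOn l (Ioi 0))
    {c : ℝ} (hc : c < ∫ u in Ioi 0, l u) :
    ∃ a : ℝ, 0 < a ∧ ∃ m : ℕ, c < ∫ u in a..a + m * a, l u := by
  set a : ℕ → ℝ := fun n => 1 / (n + 1)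
  set b : ℕ → ℝ := fun n => a n + ((n + 1) ^ 2 : ℕ) * a n
  have ha_pos : ∀ n, 0 < a n := fun n => by positivity
  have ha : Tendsto a atTop (𝓝 0) := tendsto_one_div_add_atTop_nhds_zero_nat
  have hb : Tendsto b atTop atTop := by
    refine tendsto_atTop_mono (fun n => ?_) tendsto_natCast_atTop_atTop
    have : b n = a n + (n + 1) := by simp only [b, a]; field_simp; push_cast; ring
    linarith [ha_pos n]
  have hcover : AECover (volume.restrict (Ioi 0)) atTop fun n => Ioc (a n) (b n) := by
    simpa only [Ioi_inter_Iic] using (aecover_Ioi_of_Ioi ha).inter (aecover_Iic hb)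
  obtain ⟨n, hn⟩ := ((hcover.integral_tendsto_of_countably_generated hl).eventually
    (eventually_gt_nhds hc)).exists
  refine ⟨a n, ha_pos n, (n + 1) ^ 2, ?_⟩
  rw [Measure.restrict_restrict measurableSet_Ioc,
    inter_eq_left.2 (Ioc_subset_Ioi_self.trans (Ioi_subset_Ioi (ha_pos n).le))] at hn
  rwa [intervalIntegral.integral_of_le (le_add_of_nonneg_right (by positivity))]

theorem mul_card_filter_range_le {h x : ℝ} (hh : 0 ≤ h) (hx : 0 ≤ x) {t : ℕ → ℝ}
    (ht : ∀ i : ℕ, (i + 1) * h ≤ t i) (m : ℕ) :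
    h * #{i ∈ range m | t i ≤ x} ≤ x := by
  induction m with
  | zero => simpa using hx
  | succ m ih =>
    rw [range_add_one, filter_insert]
    split_ifs with htm
    · have hcard : (#(insert m {i ∈ range m | t i ≤ x}) : ℝ) ≤ m + 1 := by
        have := (card_insert_le m {i ∈ range m | t i ≤ x}).trans
          (Nat.succ_le_succ ((card_filter_le _ _).trans (card_range m).le))
        exact_mod_cast this
      calc h * #(insert m {i ∈ range m | t i ≤ x}) ≤ (m + 1) * h := by nlinarith
        _ ≤ x := (ht m).trans htm
    · exact ih

theorem mul_sum_countP_le_sum {h : ℝ} (hh : 0 ≤ h) {t : ℕ → ℝ}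
    (ht : ∀ i : ℕ, (i + 1) * h ≤ t i) (m : ℕ) (s : Multiset ℕ) :
    h * ∑ i ∈ range m, (s.countP (fun k : ℕ => t i ≤ k) : ℝ) ≤ s.sum := by
  induction s using Multiset.induction_on with
  | empty => simp
  | cons c s ih =>
    simp only [Multiset.countP_cons, Nat.cast_add, Nat.cast_ite, Nat.cast_one, Nat.cast_zero,
      sum_add_distrib, sum_boole, mul_add, Multiset.sum_cons]
    have := mul_card_filter_range_le hh (Nat.cast_nonneg c) ht m
    linarith

theorem nuAbove_eq_countP {N : ℕ} (η : Nat.Partition N) (u : ℝ) :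
    nuAbove η u = η.parts.countP (fun k : ℕ => u ≤ k) := by
  rw [Multiset.countP_eq_card_filter, nuAbove]
  -- `nuAbove` casts the parts to `ℝ` through the `Multiset` monad before filtering
  show Multiset.card (Multiset.filter _ (η.parts.bind fun a => {(a : ℝ)})) = _
  rw [Multiset.bind_singleton, Multiset.filter_map, Multiset.card_map]
  rfl

theorem mul_sum_nuAbove_le {N : ℕ} (η : Nat.Partition N) {p : ℕ} (hp : p ∈ η.parts) {h : ℝ}
    (hh : 0 ≤ h) {t : ℕ → ℝ} (ht : ∀ i : ℕ, (i + 1) * h ≤ t i) (m : ℕ) :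
    h * ∑ i ∈ range m, (nuAbove η (t i) : ℝ) ≤ h * m + (N - p) := by
  obtain ⟨s, hs⟩ := Multiset.exists_cons_of_mem hp
  have hsum : (p : ℝ) + s.sum = N := by
    have := η.parts_sum
    rw [hs, Multiset.sum_cons] at this
    exact_mod_cast this
  have hν : ∀ i, (nuAbove η (t i) : ℝ) ≤ 1 + s.countP (fun k : ℕ => t i ≤ k) := by
    intro i
    rw [nuAbove_eq_countP, hs, Multiset.countP_cons]
    push_cast
    split_ifs <;> linarith
  calc h * ∑ i ∈ range m, (nuAbove η (t i) : ℝ)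
      ≤ h * ∑ i ∈ range m, (1 + s.countP (fun k : ℕ => t i ≤ k) : ℝ) := by
        gcongr with i; exact hν i
    _ = h * m + h * ∑ i ∈ range m, (s.countP (fun k : ℕ => t i ≤ k) : ℝ) := by
        rw [sum_add_distrib]; simp [mul_add]
    _ ≤ h * m + (N - p) := by linarith [mul_sum_countP_le_sum hh ht m s]

theorem qN_mem_parts {N : ℕ} (η : Nat.Partition N) (hN : 0 < N) : qN η ∈ η.parts := by
  refine Multiset.sup_mem_of_bot_lt (Nat.pos_of_ne_zero fun h0 => ?_)
  obtain ⟨p, hp⟩ := Multiset.exists_mem_of_ne_zero (s := η.parts) fun h => by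
    simpa [h, hN.ne] using η.parts_sum
  exact (η.parts_pos hp).ne' (Nat.le_zero.1 (h0 ▸ Multiset.le_sup hp))

theorem mul_sum_lt_of_lt_qN {N : ℕ} (η : Nat.Partition N) (hN : 0 < N) {r a ε α : ℝ}
    (hr : 0 < r) (ha : 0 < a) {l : ℝ → ℝ} {m : ℕ}
    (hclose : ∀ i < m, l (a + i * a) - ε ≤ r / N * nuAbove η (r * (a + i * a)))
    (hbig : α * N < qN η) :
    a * ∑ i ∈ range m, l (a + i * a) < 1 - α + (ε + r / N) * (m * a) := by
  have hN' : (0 : ℝ) < N := by exact_mod_cast hN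
  set S := ∑ i ∈ range m, (nuAbove η (r * (a + i * a)) : ℝ)
  -- the grid points `r * (a + i * a)` are the multiples `(i + 1) * (r * a)`
  have hS : r * a * S ≤ r * a * m + (N - qN η) :=
    mul_sum_nuAbove_le η (qN_mem_parts η hN) (by positivity) (fun i => by ring_nf; rfl) m
  have hlower : a * ∑ i ∈ range m, l (a + i * a) - ε * (m * a) ≤ r / N * a * S := by
    have := sum_le_sum fun i hi => hclose i (mem_range.1 hi)
    rw [sum_sub_distrib, sum_const, card_range, nsmul_eq_mul, ← mul_sum] at this
    nlinarith
  have hupper : r / N * a * S < r / N * (m * a) + (1 - α) := by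
    rw [div_mul_eq_mul_div, div_mul_eq_mul_div, div_lt_iff₀ hN']
    field_simp
    linarith
  linarith

theorem sub_le_of_sSup_abs_sub_lt {N : ℕ} (η : Nat.Partition N) {ρ r a b ε : ℝ} {l : ℝ → ℝ}
    (hl : ContinuousOn l (Icc a b))
    (hdev : sSup ((fun u => |ρ * nuAbove η (r * u) - l u|) '' Icc a b) < ε)
    {u : ℝ} (hu : u ∈ Icc a b) : l u - ε ≤ ρ * nuAbove η (r * u) := by
  obtain ⟨C, hC⟩ := isCompact_Icc.exists_bound_of_continuousOn hl
  have hbdd : BddAbove ((fun u => |ρ * nuAbove η (r * u) - l u|) '' Icc a b) := by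
    refine ⟨|ρ| * Multiset.card η.parts + C, ?_⟩
    rintro _ ⟨v, hv, rfl⟩
    have hν : (nuAbove η (r * v) : ℝ) ≤ Multiset.card η.parts := by
      rw [nuAbove_eq_countP]; exact_mod_cast Multiset.countP_le_card _ _
    calc |ρ * nuAbove η (r * v) - l v| ≤ |ρ * nuAbove η (r * v)| + |l v| := abs_sub _ _
      _ ≤ |ρ| * Multiset.card η.parts + C := by
          rw [abs_mul, Nat.abs_cast]
          gcongr
          exact hC v hv
  have := (le_csSup hbdd (mem_image_of_mem _ hu)).trans_lt hdev
  linarith [(abs_lt.1 this).1]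

theorem prob_le_one_sub_prob {N : ℕ} {μ : Nat.Partition N → ℝ} (hμ : ∀ η, 0 ≤ μ η)
    (hμ_one : ∑ η, μ η = 1) {P G : Nat.Partition N → Prop} (hPG : ∀ η, P η → ¬ G η) :
    prob μ P ≤ 1 - prob μ G := by
  rw [← hμ_one, ← sum_filter_add_sum_filter_not univ G, prob, prob, add_sub_cancel_left]
  exact sum_le_sum_of_subset_of_nonneg (monotone_filter_right _ fun η _ => hPG η) fun η _ _ => hμ η

/-- a sequence of measures with a limit shape does not exhibit gelation. -/
theorem stmt1 (μ : ∀ N : ℕ, Nat.Partition N → ℝ) (hμ : IsProbSeq μ)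
    (r : ℕ → ℝ) (l : ℝ → ℝ) (hls : HasLimitShape μ r l) :
    ∀ α : ℝ, 0 < α → α < 1 →
      Tendsto (fun N : ℕ => prob (μ N) (fun η => α * (N : ℝ) < (qN η : ℝ)))
        atTop (𝓝 0) := by
  intro α hα _
  obtain ⟨hr, hρ, hcont, hanti, -, hl_one, hconc⟩ := hls
  have hl_int : IntegrableOn l (Ioi 0) := by
    by_contra h
    exact zero_ne_one (integral_undef h ▸ hl_one)
  obtain ⟨a, ha, m, hm⟩ :=
    exists_intervalIntegral_gt_of_lt_integral_Ioi hl_int (c := 1 - α / 2) (by linarith)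
  have hriemann : ∫ u in a..a + m * a, l u ≤ a * ∑ i ∈ range m, l (a + i * a) :=
    (hanti.mono fun u hu => ha.le.trans hu.1).integral_le_mul_sum ha
  have hma : 0 < m * a := by
    refine mul_pos (Nat.cast_pos.2 (Nat.pos_of_ne_zero fun hm0 => ?_)) ha
    simp only [hm0, Nat.cast_zero, zero_mul, add_zero, intervalIntegral.integral_same] at hm
    linarith
  set ε := α / 4 / (m * a)
  have hε : ε * (m * a) = α / 4 := div_mul_cancel₀ _ hma.ne'
  have hsmall : ∀ᶠ N : ℕ in atTop, r N / N * (m * a) < α / 4 := by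
    refine (hρ.mul_const (m * a)).eventually (eventually_lt_nhds ?_)
    rw [zero_mul]; positivity
  have hgood := hconc a (a + m * a) ε ha (by linarith) (by positivity)
  refine squeeze_zero' ?_ ?_ (by simpa using (tendsto_const_nhds (x := (1 : ℝ))).sub hgood)
  · filter_upwards [eventually_ge_atTop 1] with N hN
    exact sum_nonneg fun η _ => (hμ N hN).1 η
  filter_upwards [hsmall, eventually_ge_atTop 1] with N hN_small hN
  refine prob_le_one_sub_prob (hμ N hN).1 (hμ N hN).2 fun η hbig hdev => ?_
  have hclose : ∀ i < m, l (a + i * a) - ε ≤ r N / N * nuAbove η (r N * (a + i * a)) :=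
    fun i hi => sub_le_of_sSup_abs_sub_lt η (hcont.mono fun u hu => ha.le.trans hu.1) hdev
      ⟨by nlinarith [Nat.cast_nonneg (α := ℝ) i], by gcongr⟩
  have := mul_sum_lt_of_lt_qN η hN (hr N hN) ha hclose hbig
  rw [add_mul, hε] at this
  linarith
end
end

section
/- Let (μ_N)_{N≥1} be probability measures, μ_N on Ω_N, having a limit shape l under a scaling (r_N). Then for every ε > 0 there exist reals 0 < u₁ < u_d < ∞ such that lim_{N→∞} μ_N{η ∈ Ω_N : Σ_{k = ⌊u₁·r_N⌋}^{⌊u_d·r_N⌋ − 1} k·n_k(η) > (1−ε)·N} = 1; that is, asymptotically almost all of the mass N is carried by parts of size between u₁·r_N and u_d·r_N. -/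
open scoped Classical BigOperators Topology
open Filter MeasureTheory ProbabilityTheory Finset

noncomputable section

/-
Write `ν t` for the number of parts of size at least `t`. Summation by parts gives, for `A ≤ B`,
`∑_{A ≤ k < B} k n_k ≥ ∑_{A < t ≤ B} ν t - B ν B`. Take `A = ⌊u₁ r⌋`, `B = ⌊u_d r⌋`. On the event of
the limit shape with window `[u₁, u_d]`, `(r/N) ν t` is within `ε₀` of `l (t/r)` at every grid point
`t/r ∈ [u₁, u_d]`, so the first sum is a Riemann sum of mesh `1/r` and is at least about
`N ∫_{u₁}^{u_d} l`, which exceeds `(1 - ε) N` once `u₁` is small and `u_d` large. The boundary term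
`B ν B` is about `N u_d l(u_d)`, which is small because `x l(x) → 0` for an antitone integrable `l`.

The mesh tends to `0` because `r_N → ∞`, which is itself forced by the limit shape: `u ↦ ν (r u)`
only jumps at multiples of `1/r`, and such a step function can follow a continuous `l` with
`l a > l b` to within `ε` on `[a, b]` only if `r (b - a) + 1 > (l a - l b) / (2 ε)`.
-/

lemma card_filter_le_eq_count_add (s : Multiset ℕ) (k : ℕ) :
    Multiset.card (s.filter (k ≤ ·)) = s.count k + Multiset.card (s.filter (k + 1 ≤ ·)) := by
  induction s using Multiset.induction_on with
  | empty => simp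
  | cons a s ih =>
    simp only [Multiset.filter_cons, Multiset.count_cons, Multiset.card_add, ih]
    split_ifs <;> simp <;> omega

section Partition

variable {N : ℕ} (η : Nat.Partition N)

-- The ascription `(k : ℝ)` in `nuAbove` makes it filter `η.parts` coerced to a `Multiset ℝ`.
lemma nuAbove_eq_card_filter (u : ℝ) :
    nuAbove η u = Multiset.card (η.parts.filter fun k : ℕ => u ≤ k) := by
  have : (do let a ← η.parts; pure (a : ℝ) : Multiset ℝ) = η.parts.map ((↑) : ℕ → ℝ) :=
    Multiset.bind_singleton _ _
  rw [nuAbove, this, Multiset.filter_map, Multiset.card_map]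
  rfl

lemma nuAbove_natCast_ceil (x : ℝ) : nuAbove η ⌈x⌉₊ = nuAbove η x := by
  simp only [nuAbove_eq_card_filter, Nat.cast_le, Nat.ceil_le]

lemma nuAbove_antitone : Antitone (nuAbove η) := fun x y hxy => by
  simp only [nuAbove_eq_card_filter]
  exact Multiset.card_le_card (Multiset.monotone_filter_right _ fun k hk => hxy.trans hk)

lemma nuAbove_natCast (k : ℕ) : nuAbove η k = pc η k + nuAbove η (k + 1 : ℕ) := by
  simp only [nuAbove_eq_card_filter, pc, Nat.cast_le]
  exact card_filter_le_eq_count_add η.parts k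

lemma sum_Ico_mul_pc_add {A B : ℕ} (hAB : A ≤ B) :
    ∑ k ∈ Ico A B, k * pc η k + B * nuAbove η B =
      A * nuAbove η A + ∑ t ∈ Ico (A + 1) (B + 1), nuAbove η t := by
  induction B, hAB using Nat.le_induction with
  | base => simp
  | succ B hAB ih =>
    rw [sum_Ico_succ_top hAB, sum_Ico_succ_top (by omega), ← add_assoc, ← ih, nuAbove_natCast η B]
    ring

lemma sum_nuAbove_sub_le {A B : ℕ} (hAB : A ≤ B) :
    ∑ t ∈ Ico (A + 1) (B + 1), (nuAbove η t : ℝ) - B * nuAbove η B ≤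
      ((∑ k ∈ Ico A B, k * pc η k : ℕ) : ℝ) := by
  have hid : ((∑ k ∈ Ico A B, k * pc η k : ℕ) : ℝ) + B * nuAbove η B =
      A * nuAbove η A + ∑ t ∈ Ico (A + 1) (B + 1), (nuAbove η t : ℝ) := by
    exact_mod_cast sum_Ico_mul_pc_add η hAB
  have : (0 : ℝ) ≤ A * nuAbove η A := by positivity
  linarith

end Partition

section Prob

variable {N : ℕ} {μ : Nat.Partition N → ℝ} {P Q : Nat.Partition N → Prop}

lemma prob_mono (hμ : ∀ η, 0 ≤ μ η) (h : ∀ η, P η → Q η) : prob μ P ≤ prob μ Q :=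
  sum_le_sum_of_subset_of_nonneg (monotone_filter_right _ fun η _ => h η) fun η _ _ => hμ η

lemma prob_le_one (hμ : ∀ η, 0 ≤ μ η) (htot : ∑ η, μ η = 1) : prob μ P ≤ 1 :=
  htot ▸ sum_le_sum_of_subset_of_nonneg (filter_subset _ _) fun η _ _ => hμ η

lemma exists_of_prob_ne_zero (h : prob μ P ≠ 0) : ∃ η, P η := by
  obtain ⟨η, hη, -⟩ := exists_ne_zero_of_sum_ne_zero h
  exact ⟨η, (mem_filter.1 hη).2⟩

end Prob

lemma exists_pos_le_half_and_mul_le {c δ : ℝ} (hc : 0 ≤ c) (hδ : 0 < δ) :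
    ∃ u : ℝ, 0 < u ∧ u ≤ 1 / 2 ∧ 2 * u * c ≤ δ := by
  refine ⟨min (1 / 2) (δ / (2 * c + 1)), by positivity, min_le_left _ _, ?_⟩
  calc 2 * min (1 / 2) (δ / (2 * c + 1)) * c ≤ 2 * (δ / (2 * c + 1)) * c := by
        gcongr; exact min_le_right _ _
    _ = δ * (2 * c / (2 * c + 1)) := by ring
    _ ≤ δ := mul_le_of_le_one_right hδ.le ((div_le_one (by positivity)).2 (by linarith))

section Antitone

variable {l : ℝ → ℝ} (hanti : AntitoneOn l (Set.Ici 0))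
include hanti

lemma AntitoneOn.intervalIntegrable_of_nonneg {a b : ℝ} (ha : 0 ≤ a) (hb : 0 ≤ b) :
    IntervalIntegrable l volume a b :=
  (hanti.mono fun _ hx => le_trans (le_min ha hb) hx.1).intervalIntegrable

lemma intervalIntegral_zero_sub_mul_le {c d : ℝ} (hc : 0 ≤ c) (hd : 0 ≤ d) :
    (∫ u in 0..d, l u) - c * l 0 ≤ ∫ u in c..d, l u := by
  rw [← intervalIntegral.integral_interval_sub_left (hanti.intervalIntegrable_of_nonneg le_rfl hd)
    (hanti.intervalIntegrable_of_nonneg le_rfl hc)]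
  gcongr
  calc ∫ u in 0..c, l u ≤ ∫ _ in 0..c, l 0 :=
        intervalIntegral.integral_mono_on hc (hanti.intervalIntegrable_of_nonneg le_rfl hc)
          intervalIntegrable_const fun u hu => hanti Set.self_mem_Ici hu.1 hu.1
    _ = c * l 0 := by simp

lemma AntitoneOn.mul_integral_div_le_sum {r : ℝ} (hr : 0 < r) {a b : ℕ} (hab : a ≤ b) :
    r * ∫ x in a / r..b / r, l x ≤ ∑ t ∈ Ico a b, l (t / r) := by
  rw [← smul_eq_mul, ← intervalIntegral.integral_comp_div l hr.ne']
  exact AntitoneOn.integral_le_sum_Ico hab fun x hx y hy hxy =>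
    hanti (div_nonneg ((Nat.cast_nonneg a).trans hx.1) hr.le)
      (div_nonneg ((Nat.cast_nonneg a).trans hy.1) hr.le) (div_le_div_of_nonneg_right hxy hr.le)

variable (hnonneg : ∀ u, 0 ≤ u → 0 ≤ l u) (hint : IntegrableOn l (Set.Ioi 0))
include hnonneg hint

lemma tendsto_mul_apply_atTop_zero : Tendsto (fun x => x * l x) atTop (𝓝 0) := by
  have hF := intervalIntegral_tendsto_integral_Ioi 0 hint tendsto_id
  have hF2 := hF.comp (tendsto_id.atTop_div_const (by norm_num : (0 : ℝ) < 2))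
  have hdiff : Tendsto (fun x => 2 * ((∫ u in 0..x, l u) - ∫ u in 0..x / 2, l u)) atTop (𝓝 0) := by
    simpa using (hF.sub hF2).const_mul 2
  refine tendsto_of_tendsto_of_tendsto_of_le_of_le' tendsto_const_nhds hdiff ?_ ?_
  · filter_upwards [eventually_ge_atTop 0] with x hx
    exact mul_nonneg hx (hnonneg x hx)
  · filter_upwards [eventually_ge_atTop 0] with x hx
    rw [intervalIntegral.integral_interval_sub_left (hanti.intervalIntegrable_of_nonneg le_rfl hx)
      (hanti.intervalIntegrable_of_nonneg le_rfl (by positivity))]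
    calc x * l x = 2 * ∫ _ in x / 2..x, l x := by simp; ring
      _ ≤ _ := by
        gcongr
        exact intervalIntegral.integral_mono_on (by linarith) intervalIntegrable_const
          (hanti.intervalIntegrable_of_nonneg (by positivity) hx)
          fun u hu => hanti (le_trans (by positivity) hu.1) hx hu.2

lemma exists_integral_gt_and_forall_mul_le {δ : ℝ} (hδ : 0 < δ) :
    ∃ ud, 1 ≤ ud ∧ (∫ u in Set.Ioi 0, l u) - δ < ∫ u in 0..ud, l u ∧
      ∀ v, ud - 1 ≤ v → v * l v ≤ δ := by
  obtain ⟨X, hX⟩ := eventually_atTop.1 <|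
    (tendsto_mul_apply_atTop_zero hanti hnonneg hint).eventually (ge_mem_nhds hδ)
  obtain ⟨ud, hF, hud⟩ := ((intervalIntegral_tendsto_integral_Ioi 0 hint tendsto_id).eventually
    (lt_mem_nhds (sub_lt_self _ hδ))).and (eventually_ge_atTop (max X 0 + 1)) |>.exists
  exact ⟨ud, by linarith [le_max_right X 0], hF, fun v hv => hX v (by linarith [le_max_left X 0])⟩

lemma exists_apply_lt_of_integral_eq_one (hI : ∫ u in Set.Ioi 0, l u = 1) :
    ∃ a b, 0 < a ∧ a < b ∧ l b < l a := by
  obtain ⟨a, ha, hla⟩ : ∃ a, 0 < a ∧ 0 < l a := by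
    by_contra! h
    have : ∫ u in Set.Ioi 0, l u = 0 := setIntegral_eq_zero_of_forall_eq_zero fun u hu =>
      le_antisymm (h u hu) (hnonneg u (le_of_lt hu))
    linarith
  obtain ⟨b, hbl, hb⟩ := ((tendsto_mul_apply_atTop_zero hanti hnonneg hint).eventually
    (gt_mem_nhds hla)).and (eventually_ge_atTop (max a 1 + 1)) |>.exists
  have hb1 : 1 ≤ b := by linarith [le_max_right a 1]
  refine ⟨a, b, ha, by linarith [le_max_left a 1], ?_⟩
  nlinarith [hnonneg b (by linarith)]

end Antitone

section StepApproximation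

variable {l : ℝ → ℝ} {a b : ℝ}

lemma ContinuousOn.exists_apply_eq_equally_spaced (hl : ContinuousOn l (Set.Icc a b))
    (hab : a ≤ b) (hlab : l b ≤ l a) (K : ℕ) :
    ∃ w : ℕ → ℝ, ∀ j ≤ K, w j ∈ Set.Icc a b ∧ l (w j) = l a - j * ((l a - l b) / K) := by
  have hs : 0 ≤ (l a - l b) / K := div_nonneg (sub_nonneg.2 hlab) K.cast_nonneg
  have hlevel : ∀ j : ℕ, ∃ w, j ≤ K → w ∈ Set.Icc a b ∧ l w = l a - j * ((l a - l b) / K) := by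
    intro j
    by_cases hj : j ≤ K
    · have hjs : j * ((l a - l b) / K) ≤ l a - l b := by
        rcases K.eq_zero_or_pos with rfl | hK
        · simpa using hlab
        calc j * ((l a - l b) / K) ≤ K * ((l a - l b) / K) := by gcongr
          _ = l a - l b := mul_div_cancel₀ _ (by positivity)
      obtain ⟨w, hw, hlw⟩ := intermediate_value_Icc' hab hl
        (⟨by linarith, by nlinarith⟩ : l a - j * ((l a - l b) / K) ∈ Set.Icc (l b) (l a))
      exact ⟨w, fun _ => ⟨hw, hlw⟩⟩
    · exact ⟨a, fun h => absurd h hj⟩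
  choose w hw using hlevel
  exact ⟨w, hw⟩

lemma natCast_lt_of_forall_abs_sub_lt {r ε : ℝ} {K : ℕ} (g : ℕ → ℝ) (hab : a ≤ b) (hr : 0 ≤ r)
    (hl : ContinuousOn l (Set.Icc a b)) (hK : 0 < K) (hgap : 2 * K * ε ≤ l a - l b)
    (hg : ∀ u ∈ Set.Icc a b, |g ⌈r * u⌉₊ - l u| < ε) :
    (K : ℝ) < r * (b - a) + 1 := by
  have hε : 0 < ε := (abs_nonneg _).trans_lt (hg a ⟨le_rfl, hab⟩)
  have hs : 2 * ε ≤ (l a - l b) / K := by rw [le_div_iff₀ (by positivity)]; linarith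
  obtain ⟨w, hw⟩ := hl.exists_apply_eq_equally_spaced hab (by nlinarith) K
  -- distinct levels are `≥ 2ε` apart, so no value of `g` is `ε`-close to two of them
  have hinj : Set.InjOn (fun j => ⌈r * w j⌉₊) (range (K + 1)) := by
    intro i hi j hj hij
    simp only [coe_range, Set.mem_Iio, Nat.lt_succ_iff] at hi hj hij
    have hgi := hg _ (hw i hi).1
    have hgj := hg _ (hw j hj).1
    rw [hij, (hw i hi).2, abs_lt] at hgi
    rw [(hw j hj).2, abs_lt] at hgj
    by_contra hne
    rcases Nat.lt_or_gt_of_ne hne with h | h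
    · have : (i : ℝ) + 1 ≤ j := by exact_mod_cast h
      nlinarith
    · have : (j : ℝ) + 1 ≤ i := by exact_mod_cast h
      nlinarith
  have hmaps : Set.MapsTo (fun j => ⌈r * w j⌉₊) (range (K + 1)) (Icc ⌈r * a⌉₊ ⌈r * b⌉₊) := by
    intro j hj
    have hwj := (hw j (by simpa [Nat.lt_succ_iff] using hj)).1
    simp only [coe_Icc, Set.mem_Icc]
    exact ⟨Nat.ceil_mono (by gcongr; exact hwj.1), Nat.ceil_mono (by gcongr; exact hwj.2)⟩
  have hcard := card_le_card_of_injOn _ hmaps hinj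
  rw [card_range, Nat.card_Icc] at hcard
  have hpos : 0 < r * b := Nat.ceil_pos.mp (by omega)
  have hKle : (K : ℝ) + ⌈r * a⌉₊ ≤ ⌈r * b⌉₊ := by
    exact_mod_cast (by omega : K + ⌈r * a⌉₊ ≤ ⌈r * b⌉₊)
  linarith [Nat.le_ceil (r * a), Nat.ceil_lt_add_one hpos.le]

end StepApproximation

section FloorGrid

variable {l : ℝ → ℝ} {r u₁ ud ε₀ : ℝ} (hr : 0 < r) (hu₁ : 0 ≤ u₁) (hgap : u₁ + 1 / r ≤ ud)
  (x : ℕ → ℝ) (hx : ∀ t : ℕ, ⌊u₁ * r⌋₊ < t → t ≤ ⌊ud * r⌋₊ → |x t - l (t / r)| < ε₀)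
include hr hu₁ hgap

lemma floor_mul_lt_floor_mul : ⌊u₁ * r⌋₊ < ⌊ud * r⌋₊ := by
  have : u₁ * r + 1 ≤ ud * r := by
    have := mul_le_mul_of_nonneg_right hgap hr.le
    rwa [add_mul, one_div_mul_cancel hr.ne'] at this
  have : (⌊u₁ * r⌋₊ : ℝ) < ⌊ud * r⌋₊ := by
    linarith [Nat.floor_le (by positivity : 0 ≤ u₁ * r), Nat.lt_floor_add_one (ud * r)]
  exact_mod_cast this

include hx

lemma nonneg_of_forall_abs_sub_lt : 0 ≤ ε₀ :=
  (abs_nonneg _).trans (hx _ (floor_mul_lt_floor_mul hr hu₁ hgap) le_rfl).le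

lemma mul_integral_sub_le_sum_of_abs_sub_lt (hanti : AntitoneOn l (Set.Ici 0))
    (hnonneg : ∀ u, 0 ≤ u → 0 ≤ l u) :
    r * (∫ u in (u₁ + 1 / r)..ud, l u) - r * ud * ε₀ ≤
      ∑ t ∈ Ico (⌊u₁ * r⌋₊ + 1) (⌊ud * r⌋₊ + 1), x t := by
  set A := ⌊u₁ * r⌋₊
  set B := ⌊ud * r⌋₊
  have hAB := floor_mul_lt_floor_mul hr hu₁ hgap
  have hc : (0 : ℝ) ≤ ((A + 1 : ℕ) : ℝ) / r := by positivity
  have hinterval : ∫ u in (u₁ + 1 / r)..ud, l u ≤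
      ∫ u in ((A + 1 : ℕ) : ℝ) / r..((B + 1 : ℕ) : ℝ) / r, l u := by
    refine intervalIntegral.integral_mono_interval ?_ hgap ?_ ?_
      (hanti.intervalIntegrable_of_nonneg hc (by positivity))
    · rw [Nat.cast_succ, add_div]
      gcongr
      rw [div_le_iff₀ hr]
      exact Nat.floor_le (by positivity)
    · rw [le_div_iff₀ hr, Nat.cast_succ]
      exact (Nat.lt_floor_add_one _).le
    · exact (ae_restrict_iff' measurableSet_Ioc).2 (Eventually.of_forall fun u hu =>
        hnonneg u (hc.trans hu.1.le))
  have hpoint : ∑ t ∈ Ico (A + 1) (B + 1), l (t / r) ≤ ∑ t ∈ Ico (A + 1) (B + 1), (x t + ε₀) :=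
    sum_le_sum fun t ht => by
      rw [mem_Ico] at ht
      linarith [(abs_lt.1 (hx t (by omega) (by omega))).1]
  rw [sum_add_distrib, sum_const, Nat.card_Ico, nsmul_eq_mul] at hpoint
  have hcard : ((B + 1 - (A + 1) : ℕ) : ℝ) * ε₀ ≤ r * ud * ε₀ := by
    gcongr
    · exact nonneg_of_forall_abs_sub_lt hr hu₁ hgap x hx
    calc ((B + 1 - (A + 1) : ℕ) : ℝ) ≤ B := by exact_mod_cast (by omega : B + 1 - (A + 1) ≤ B)
      _ ≤ ud * r := Nat.floor_le (by nlinarith [one_div_pos.2 hr])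
      _ = r * ud := mul_comm _ _
  have := hanti.mul_integral_div_le_sum hr (by omega : A + 1 ≤ B + 1)
  have : r * ∫ u in (u₁ + 1 / r)..ud, l u ≤ _ := mul_le_mul_of_nonneg_left hinterval hr.le
  linarith

lemma floor_mul_mul_le {τ : ℝ} (htail : ∀ v ∈ Set.Icc (ud - 1 / r) ud, v * l v ≤ τ) :
    ⌊ud * r⌋₊ * x ⌊ud * r⌋₊ ≤ r * τ + r * ud * ε₀ := by
  set B := ⌊ud * r⌋₊
  have hud : 0 ≤ ud := by linarith [one_div_pos.2 hr]
  have hB : (B : ℝ) ≤ ud * r := Nat.floor_le (by positivity)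
  have hBr : (B : ℝ) / r ∈ Set.Icc (ud - 1 / r) ud := by
    constructor
    · rw [show ud - 1 / r = (ud * r - 1) / r by field_simp]
      gcongr
      linarith [Nat.lt_floor_add_one (ud * r)]
    · rw [div_le_iff₀ hr]; exact hB
  have hxB : x B ≤ l (B / r) + ε₀ := by
    linarith [(abs_lt.1 (hx B (floor_mul_lt_floor_mul hr hu₁ hgap) le_rfl)).2]
  calc B * x B ≤ B * (l (B / r) + ε₀) := by gcongr
    _ = r * (B / r * l (B / r)) + B * ε₀ := by field_simp
    _ ≤ r * τ + r * ud * ε₀ := by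
      gcongr
      · exact htail _ hBr
      · exact nonneg_of_forall_abs_sub_lt hr hu₁ hgap x hx
      · linarith

end FloorGrid

section LimitShape

variable {l : ℝ → ℝ} (hanti : AntitoneOn l (Set.Ici 0)) (hnonneg : ∀ u, 0 ≤ u → 0 ≤ l u)
include hanti hnonneg

lemma abs_sub_lt_of_sSup_lt {N : ℕ} (η : Nat.Partition N) {r a b ε : ℝ} (hr : 0 ≤ r) (ha : 0 ≤ a)
    (hsup : sSup ((fun u => |r / N * (nuAbove η (r * u) : ℝ) - l u|) '' Set.Icc a b) < ε) :
    ∀ u ∈ Set.Icc a b, |r / N * (nuAbove η (r * u) : ℝ) - l u| < ε := by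
  refine fun u hu => (le_csSup ?_ (Set.mem_image_of_mem
    (fun u => |r / N * (nuAbove η (r * u) : ℝ) - l u|) hu)).trans_lt hsup
  refine ⟨r / N * nuAbove η (r * a) + l a, ?_⟩
  rintro _ ⟨v, hv, rfl⟩
  have hν : r / N * (nuAbove η (r * v) : ℝ) ≤ r / N * nuAbove η (r * a) := by
    gcongr
    exact nuAbove_antitone η (by gcongr; exact hv.1)
  have hlv : l v ≤ l a := hanti ha (ha.trans hv.1) hv.1
  have := hnonneg v (ha.trans hv.1)
  rw [abs_le]
  constructor <;> nlinarith [show 0 ≤ r / N * (nuAbove η (r * v) : ℝ) by positivity]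

lemma mass_ge_of_forall_abs_sub_lt {N : ℕ} (hN : 0 < N) (η : Nat.Partition N)
    {r u₁ ud ε₀ τ : ℝ} (hr : 0 < r) (hu₁ : 0 ≤ u₁) (hgap : u₁ + 1 / r ≤ ud)
    (htail : ∀ v ∈ Set.Icc (ud - 1 / r) ud, v * l v ≤ τ)
    (hη : ∀ u ∈ Set.Icc u₁ ud, |r / N * nuAbove η (r * u) - l u| < ε₀) :
    N * ((∫ u in (u₁ + 1 / r)..ud, l u) - 2 * ud * ε₀ - τ) ≤
      ((∑ k ∈ Ico ⌊u₁ * r⌋₊ ⌊ud * r⌋₊, k * pc η k : ℕ) : ℝ) := by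
  set M := ((∑ k ∈ Ico ⌊u₁ * r⌋₊ ⌊ud * r⌋₊, k * pc η k : ℕ) : ℝ)
  set x : ℕ → ℝ := fun t => r / N * nuAbove η t
  have hx : ∀ t : ℕ, ⌊u₁ * r⌋₊ < t → t ≤ ⌊ud * r⌋₊ → |x t - l (t / r)| < ε₀ := fun t hAt htB => by
    have hAt' : u₁ * r < t := by
      have := Nat.lt_floor_add_one (u₁ * r)
      have : (⌊u₁ * r⌋₊ : ℝ) + 1 ≤ t := by exact_mod_cast hAt
      linarith
    have htB' : (t : ℝ) ≤ ud * r :=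
      le_trans (by exact_mod_cast htB) (Nat.floor_le (by nlinarith [one_div_pos.2 hr]))
    have := hη (t / r) ⟨by rw [le_div_iff₀ hr]; linarith, by rw [div_le_iff₀ hr]; linarith⟩
    rwa [mul_div_cancel₀ _ hr.ne'] at this
  have hsum := mul_integral_sub_le_sum_of_abs_sub_lt hr hu₁ hgap x hx hanti hnonneg
  have hboundary := floor_mul_mul_le hr hu₁ hgap x hx htail
  have hmass : ∑ t ∈ Ico (⌊u₁ * r⌋₊ + 1) (⌊ud * r⌋₊ + 1), x t - ⌊ud * r⌋₊ * x ⌊ud * r⌋₊ ≤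
      r / N * M := by
    simp only [x, ← mul_sum]
    rw [mul_left_comm, ← mul_sub]
    gcongr
    exact sum_nuAbove_sub_le η (floor_mul_lt_floor_mul hr hu₁ hgap).le
  have hscaled : r * ((∫ u in (u₁ + 1 / r)..ud, l u) - 2 * ud * ε₀ - τ) ≤ r / N * M := by
    linarith
  refine le_of_mul_le_mul_left ?_ hr
  calc _ = N * (r * ((∫ u in (u₁ + 1 / r)..ud, l u) - 2 * ud * ε₀ - τ)) := by ring
    _ ≤ N * (r / N * M) := by gcongr
    _ = r * M := by field_simp

lemma mass_gt_of_forall_abs_sub_lt {N : ℕ} (hN : 0 < N) (η : Nat.Partition N)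
    {r u₁ ud δ : ℝ} (hr : 0 < r) (hu₁ : 0 < u₁) (hu₁half : u₁ ≤ 1 / 2) (hr1 : 1 / r < u₁)
    (hud : 1 ≤ ud) (hl0 : 2 * u₁ * l 0 ≤ δ) (hFud : 1 - δ < ∫ u in 0..ud, l u)
    (htail : ∀ v, ud - 1 ≤ v → v * l v ≤ δ)
    (hη : ∀ u ∈ Set.Icc u₁ ud, |r / N * nuAbove η (r * u) - l u| < δ / (2 * ud)) :
    (1 - 4 * δ) * N < ((∑ k ∈ Ico ⌊u₁ * r⌋₊ ⌊ud * r⌋₊, k * pc η k : ℕ) : ℝ) := by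
  have hmass := mass_ge_of_forall_abs_sub_lt hanti hnonneg hN η hr hu₁.le (by linarith)
    (fun v hv => htail v (by linarith [hv.1])) hη
  have hlow := intervalIntegral_zero_sub_mul_le hanti (c := u₁ + 1 / r) (d := ud)
    (by positivity) (by linarith)
  refine lt_of_lt_of_le ?_ hmass
  rw [mul_comm]
  refine mul_lt_mul_of_pos_left ?_ (by exact_mod_cast hN)
  have : (u₁ + 1 / r) * l 0 ≤ δ := by nlinarith [hnonneg 0 le_rfl]
  have : 2 * ud * (δ / (2 * ud)) = δ := by field_simp
  linarith

end LimitShape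

namespace HasLimitShape

variable {μ : ∀ N : ℕ, Nat.Partition N → ℝ} {r : ℕ → ℝ} {l : ℝ → ℝ}

lemma integrableOn (h : HasLimitShape μ r l) : IntegrableOn l (Set.Ioi 0) := by
  by_contra hl
  have hI := h.2.2.2.2.2.1
  rw [integral_undef hl] at hI
  exact zero_ne_one hI

lemma tendsto_atTop (h : HasLimitShape μ r l) : Tendsto r atTop atTop := by
  have hint := h.integrableOn
  obtain ⟨hr, -, hcont, hanti, hnonneg, hI, hconv⟩ := h
  obtain ⟨a, b, ha, hab, hlab⟩ := exists_apply_lt_of_integral_eq_one hanti hnonneg hint hI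
  refine Filter.tendsto_atTop.2 fun C => ?_
  set K := ⌈C * (b - a)⌉₊ + 1
  set ε := (l a - l b) / (2 * K)
  have hε : 0 < ε := div_pos (by linarith) (by positivity)
  filter_upwards [(hconv a b ε ha hab hε).eventually_ne one_ne_zero, eventually_ge_atTop 1]
    with N hN hN1
  obtain ⟨η, hη⟩ := exists_of_prob_ne_zero hN
  have hK := natCast_lt_of_forall_abs_sub_lt (K := K) (fun n => r N / N * nuAbove η n) hab.le
    (hr N hN1).le (hcont.mono fun u hu => ha.le.trans hu.1) (Nat.succ_pos _)
    (by rw [mul_div_cancel₀ _ (by positivity)]) fun u hu => by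
      rw [nuAbove_natCast_ceil]
      exact abs_sub_lt_of_sSup_lt hanti hnonneg η (hr N hN1).le ha.le hη u hu
  have hC : C * (b - a) ≤ ⌈C * (b - a)⌉₊ := Nat.le_ceil _
  have : C * (b - a) < r N * (b - a) := by push_cast [K] at hK; linarith
  exact (lt_of_mul_lt_mul_right this (by linarith)).le

end HasLimitShape

/-- under a limit shape, almost all of the mass `N` is carried by parts of
size between `u₁·r_N` and `u_d·r_N`. -/
theorem stmt2 (μ : ∀ N : ℕ, Nat.Partition N → ℝ) (hμ : IsProbSeq μ)
    (r : ℕ → ℝ) (l : ℝ → ℝ) (hls : HasLimitShape μ r l) :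
    ∀ ε : ℝ, 0 < ε → ∃ u₁ ud : ℝ, 0 < u₁ ∧ u₁ < ud ∧
      Tendsto (fun N : ℕ => prob (μ N) (fun η =>
          (1 - ε) * (N : ℝ) <
            ((∑ k ∈ Finset.Ico (⌊u₁ * r N⌋₊) (⌊ud * r N⌋₊), k * pc η k : ℕ) : ℝ)))
        atTop (𝓝 1) := by
  intro ε hε
  have hint := hls.integrableOn
  have hr_top := hls.tendsto_atTop
  obtain ⟨hr, -, -, hanti, hnonneg, hI, hconv⟩ := hls
  obtain ⟨δ, hδ, rfl⟩ : ∃ δ, 0 < δ ∧ ε = 4 * δ := ⟨ε / 4, by positivity, by ring⟩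
  obtain ⟨ud, hud, hFud, htail⟩ := exists_integral_gt_and_forall_mul_le hanti hnonneg hint hδ
  rw [hI] at hFud
  obtain ⟨u₁, hu₁, hu₁half, hu₁l0⟩ := exists_pos_le_half_and_mul_le (hnonneg 0 le_rfl) hδ
  refine ⟨u₁, ud, hu₁, by linarith, tendsto_of_tendsto_of_tendsto_of_le_of_le'
    (hconv u₁ ud (δ / (2 * ud)) hu₁ (by linarith) (by positivity)) tendsto_const_nhds ?_ ?_⟩
  · filter_upwards [eventually_ge_atTop 1, hr_top.eventually_gt_atTop (1 / u₁)] with N hN hrN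
    refine prob_mono (hμ N hN).1 fun η hη => ?_
    exact mass_gt_of_forall_abs_sub_lt hanti hnonneg hN η (hr N hN) hu₁ hu₁half
      (by rwa [div_lt_iff₀ (hr N hN), ← div_lt_iff₀' hu₁]) hud hu₁l0 hFud htail
      (abs_sub_lt_of_sSup_lt hanti hnonneg η (hr N hN).le hu₁.le hη)
  · filter_upwards [eventually_ge_atTop 1] with N hN using prob_le_one (hμ N hN).1 (hμ N hN).2
end
end

section
/- Fix N ≥ 1, positive reals (a_k)_{k≥1}, integers 0 = M_0 < M_1 < … < M_q < M_{q+1} = N+1, reals δ_0,…,δ_q > 0, and nonnegative integers L_0,…,L_q and N_0,…,N_q with Σ_{j=0}^q N_j = N. For j = 0,…,q put S_j* = Σ_{k=max(M_j,1)}^{M_{j+1}−1} a_k·e^{−δ_j·k}, and let Y^{(j)} be the sum of L_j i.i.d. random variables, each taking the value k ∈ {max(M_j,1),…,M_{j+1}−1} with probability a_k·e^{−δ_j·k}/S_j* (with Y^{(j)} = 0 when L_j = 0), the Y^{(0)},…,Y^{(q)} being independent. Then μ_N{η ∈ Ω_N : ν_j*(η) = L_j and K_j*(η) = N_j for all j =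 0,…,q} = c_N^{−1}·∏_{j=0}^q [ (S_j*)^{L_j}/(L_j)! · e^{δ_j·N_j} · P(Y^{(j)} = N_j) ]. -/
open scoped Classical BigOperators Topology
open Filter MeasureTheory ProbabilityTheory Finset

noncomputable section

/-- the Gibbs weight `∏_{k=1}^N a_k^{n_k}/n_k!` of a partition. -/
def wgt (a : ℕ → ℝ) (N : ℕ) (η : Nat.Partition N) : ℝ :=
  ∏ k ∈ Finset.Icc 1 N, a k ^ pc η k / (Nat.factorial (pc η k) : ℝ)

/-- the partition function `c_N`. -/
def cN (a : ℕ → ℝ) (N : ℕ) : ℝ := ∑ η : Nat.Partition N, wgt a N η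

/-- the Gibbs measure `μ_N` with parameter function `a`. -/
def gibbs (a : ℕ → ℝ) (N : ℕ) (η : Nat.Partition N) : ℝ := (cN a N)⁻¹ * wgt a N η

/-- `ν* η = Σ_{k=m}^{m'-1} n_k(η)`. -/
def nust {N : ℕ} (m m' : ℕ) (η : Nat.Partition N) : ℕ :=
  ∑ k ∈ Finset.Ico m m', pc η k

/-- `K* η = Σ_{k=m}^{m'-1} k·n_k(η)`. -/
def Kst {N : ℕ} (m m' : ℕ) (η : Nat.Partition N) : ℕ :=
  ∑ k ∈ Finset.Ico m m', k * pc η k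

/-- `S* = Σ_{k=max(m,1)}^{m'-1} a_k e^{-d·k}`. -/
def Sst (a : ℕ → ℝ) (d : ℝ) (m m' : ℕ) : ℝ :=
  ∑ k ∈ Finset.Ico (max m 1) m', a k * Real.exp (-d * (k : ℝ))

/-- `E* = Σ_{k=max(m,1)}^{m'-1} k·a_k e^{-d·k}`. -/
def Est (a : ℕ → ℝ) (d : ℝ) (m m' : ℕ) : ℝ :=
  ∑ k ∈ Finset.Ico (max m 1) m', (k : ℝ) * a k * Real.exp (-d * (k : ℝ))

/-- `V* = Σ_{k=max(m,1)}^{m'-1} k²·a_k e^{-d·k}`. -/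
def Vst (a : ℕ → ℝ) (d : ℝ) (m m' : ℕ) : ℝ :=
  ∑ k ∈ Finset.Ico (max m 1) m', (k : ℝ) ^ 2 * a k * Real.exp (-d * (k : ℝ))

/-- the mass function of `β^{(j)}`: `P(β = k) = a_k e^{-d·k}/S*` for `max(m,1) ≤ k < m'`. -/
def pmfY (a : ℕ → ℝ) (d : ℝ) (m m' : ℕ) (k : ℕ) : ℝ :=
  if k ∈ Finset.Ico (max m 1) m' then a k * Real.exp (-d * (k : ℝ)) / Sst a d m m' else 0

/-- `convPow f n m` is `P(X₁ + ⋯ + Xₙ = m)` for i.i.d. `ℕ`-valued `Xᵢ` with mass function `f`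
(equal to the indicator of `m = 0` when `n = 0`). -/
def convPow (f : ℕ → ℝ) : ℕ → ℕ → ℝ
  | 0, m => if m = 0 then 1 else 0
  | n + 1, m => ∑ i ∈ Finset.range (m + 1), f i * convPow f n (m - i)

/-!
Sorting the parts of a partition by the block `[M_j, M_{j+1})` they fall into identifies the
event with a product, over the blocks, of sets of count vectors `(n_k)` with `L_j` parts of total
size `N_j`; the Gibbs weight `∏ a_k^{n_k}/n_k!` factorizes along the blocks. Within one block the
multinomial theorem, applied to the generating polynomial `∑_k P(Y = k) X^k`, writes
`P(Y^{(j)} = N_j)` as `L_j!` times the sum of `∏ p_k^{n_k}/n_k!` over the same count vectors, and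
since `p_k = a_k e^{-δ_j k}/S_j*` each such product equals
`(S_j*)^{-L_j} e^{-δ_j N_j} ∏ a_k^{n_k}/n_k!`.
-/

open scoped Nat Function

/-- Count vectors on `s` (`n k` parts of size `k`) with `L` parts of total size `K`. -/
def countVectors (s : Finset ℕ) (L K : ℕ) : Finset (ℕ → ℕ) :=
  (s.piAntidiag L).filter fun n => ∑ k ∈ s, k * n k = K

lemma mem_countVectors {s : Finset ℕ} {L K : ℕ} {n : ℕ → ℕ} :
    n ∈ countVectors s L K ↔
      (∑ k ∈ s, n k = L ∧ ∀ k, n k ≠ 0 → k ∈ s) ∧ ∑ k ∈ s, k * n k = K := by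
  rw [countVectors, mem_filter, mem_piAntidiag]

lemma apply_eq_zero_of_mem_countVectors {s : Finset ℕ} {L K k : ℕ} {n : ℕ → ℕ}
    (hn : n ∈ countVectors s L K) (hk : k ∉ s) : n k = 0 :=
  by_contra fun h => hk ((mem_countVectors.1 hn).1.2 k h)

lemma piecewise_mem_countVectors (s : Finset ℕ) (n : ℕ → ℕ) :
    s.piecewise n 0 ∈ countVectors s (∑ k ∈ s, n k) (∑ k ∈ s, k * n k) := by
  refine mem_countVectors.2 ⟨⟨sum_congr rfl fun k hk => piecewise_eq_of_mem _ _ _ hk,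
    fun k hk => ?_⟩, sum_congr rfl fun k hk => by rw [piecewise_eq_of_mem _ _ _ hk]⟩
  by_contra h
  exact hk (piecewise_eq_of_notMem _ _ _ h)

section GeneratingFunction

open Polynomial

lemma coeff_sum_C_mul_X_pow {R : Type*} [Semiring R] {s : Finset ℕ} {f : ℕ → R}
    (hf : ∀ k ∉ s, f k = 0) (i : ℕ) : (∑ k ∈ s, C (f k) * X ^ k).coeff i = f i := by
  rw [finsetSum_coeff]
  simp only [coeff_C_mul_X_pow, sum_ite_eq]
  exact (ite_eq_left_iff.2 fun h => (hf i h).symm)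

theorem convPow_eq_coeff_pow {s : Finset ℕ} {f : ℕ → ℝ} (hf : ∀ k ∉ s, f k = 0) (n m : ℕ) :
    convPow f n m = ((∑ k ∈ s, C (f k) * X ^ k) ^ n).coeff m := by
  induction n generalizing m with
  | zero => simp [convPow, coeff_one]
  | succ n ih =>
    rw [pow_succ', coeff_mul, Nat.sum_antidiagonal_eq_sum_range_succ_mk, convPow]
    simp only [coeff_sum_C_mul_X_pow hf, ih]

theorem coeff_sum_C_mul_X_pow_pow {R : Type*} [CommSemiring R] (s : Finset ℕ) (f : ℕ → R)
    (L K : ℕ) :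
    ((∑ k ∈ s, C (f k) * X ^ k) ^ L).coeff K
      = ∑ n ∈ countVectors s L K, (Nat.multinomial s n : R) * ∏ k ∈ s, f k ^ n k := by
  rw [sum_pow_eq_sum_piAntidiag, finsetSum_coeff, countVectors, sum_filter]
  refine sum_congr rfl fun n _ => ?_
  have hmonomial : ∏ k ∈ s, (C (f k) * X ^ k) ^ n k
      = C (∏ k ∈ s, f k ^ n k) * X ^ (∑ k ∈ s, k * n k) := by
    simp_rw [mul_pow, ← C_pow, ← pow_mul, prod_mul_distrib, ← map_prod, prod_pow_eq_pow_sum]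
  rw [hmonomial, ← C_eq_natCast, ← mul_assoc, ← C_mul, coeff_C_mul_X_pow]
  simp only [eq_comm]

theorem convPow_eq_factorial_mul_sum {s : Finset ℕ} {f : ℕ → ℝ} (hf : ∀ k ∉ s, f k = 0)
    (L K : ℕ) :
    convPow f L K = L ! * ∑ n ∈ countVectors s L K, ∏ k ∈ s, f k ^ n k / (n k)! := by
  rw [convPow_eq_coeff_pow hf, coeff_sum_C_mul_X_pow_pow, mul_sum]
  refine sum_congr rfl fun n hn => ?_
  have hL : ∑ k ∈ s, n k = L := (mem_countVectors.1 hn).1.1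
  have hmultinomial : (Nat.multinomial s n : ℝ) * ∏ k ∈ s, ((n k)! : ℝ) = L ! := by
    rw [← hL, ← Nat.multinomial_spec s n]
    push_cast
    ring
  have hfactorials : ∏ k ∈ s, ((n k)! : ℝ) ≠ 0 := by positivity
  rw [prod_div_distrib, ← hmultinomial]
  field_simp

end GeneratingFunction

section ExponentialTilting

lemma pow_sum_mul_prod_div_pow {s : Finset ℕ} {c : ℕ → ℝ} (hc : ∀ k ∈ s, 0 < c k)
    (n : ℕ → ℕ) :
    (∑ k ∈ s, c k) ^ (∑ k ∈ s, n k) * ∏ k ∈ s, (c k / ∑ i ∈ s, c i) ^ n k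
      = ∏ k ∈ s, c k ^ n k := by
  rw [← prod_pow_eq_pow_sum, ← prod_mul_distrib]
  refine prod_congr rfl fun k hk => ?_
  have hS : ∑ i ∈ s, c i ≠ 0 :=
    ((hc k hk).trans_le (single_le_sum (fun i hi => (hc i hi).le) hk)).ne'
  rw [← mul_pow, mul_div_cancel₀ _ hS]

lemma prod_mul_exp_pow (a : ℕ → ℝ) (d : ℝ) (s : Finset ℕ) (n : ℕ → ℕ) :
    ∏ k ∈ s, (a k * Real.exp (-d * k)) ^ n k
      = (∏ k ∈ s, a k ^ n k) * Real.exp (-d * ↑(∑ k ∈ s, k * n k)) := by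
  simp_rw [mul_pow, prod_mul_distrib, ← Real.exp_nat_mul, ← Real.exp_sum]
  push_cast
  rw [mul_sum]
  congr 2
  exact sum_congr rfl fun k _ => by ring

theorem Sst_pow_mul_convPow_pmfY {a : ℕ → ℝ} (ha : ∀ k, 0 < a k) (d : ℝ) (m m' L K : ℕ) :
    Sst a d m m' ^ L / L ! * Real.exp (d * K) * convPow (pmfY a d m m') L K
      = ∑ n ∈ countVectors (Ico (max m 1) m') L K,
          ∏ k ∈ Ico (max m 1) m', a k ^ n k / (n k)! := by
  set s := Ico (max m 1) m'
  have hterm : ∀ n ∈ countVectors s L K,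
      Sst a d m m' ^ L * Real.exp (d * K) * ∏ k ∈ s, pmfY a d m m' k ^ n k / (n k)!
        = ∏ k ∈ s, a k ^ n k / (n k)! := by
    intro n hn
    obtain ⟨⟨hL, -⟩, hK⟩ := mem_countVectors.1 hn
    have hpmf : ∏ k ∈ s, pmfY a d m m' k ^ n k
        = ∏ k ∈ s, (a k * Real.exp (-d * k) / Sst a d m m') ^ n k :=
      prod_congr rfl fun k hk => by rw [pmfY, if_pos hk]
    have htilt := pow_sum_mul_prod_div_pow (s := s) (c := fun k => a k * Real.exp (-d * k))
      (fun k _ => mul_pos (ha k) (Real.exp_pos _)) n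
    rw [hL, ← Sst, ← hpmf, prod_mul_exp_pow, hK] at htilt
    rw [prod_div_distrib, prod_div_distrib, ← mul_div_assoc, mul_right_comm, htilt, mul_assoc,
      ← Real.exp_add, neg_mul, neg_add_cancel, Real.exp_zero, mul_one]
  rw [convPow_eq_factorial_mul_sum (s := s) (f := pmfY a d m m') (fun k hk => if_neg hk),
    ← sum_congr rfl hterm, ← mul_sum]
  field_simp

end ExponentialTilting

section Partitions

lemma pc_zero {N : ℕ} (η : N.Partition) : pc η 0 = 0 :=
  Multiset.count_eq_zero.2 fun h => (η.parts_pos h).ne' rfl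

lemma pc_eq_zero_of_lt {N k : ℕ} (η : N.Partition) (hk : N < k) : pc η k = 0 :=
  Multiset.count_eq_zero.2 fun h => hk.not_ge (η.le_of_mem_parts h)

lemma sum_Ico_max_one {R : Type*} [AddCommMonoid R] {g : ℕ → R} (hg : g 0 = 0) (m m' : ℕ) :
    ∑ k ∈ Ico (max m 1) m', g k = ∑ k ∈ Ico m m', g k := by
  refine sum_subset (Ico_subset_Ico (le_max_left m 1) le_rfl) fun k hk hk' => ?_
  simp only [mem_Ico] at hk hk'
  obtain rfl : k = 0 := by omega
  exact hg

/-- `ofSums` discards the parts of size `0`, so `n 0` is ignored. -/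
def Nat.Partition.ofCounts {N : ℕ} (s : Finset ℕ) (n : ℕ → ℕ) (h : ∑ k ∈ s, k * n k = N) :
    N.Partition :=
  .ofSums N (∑ k ∈ s, .replicate (n k) k) <| by
    simpa [Multiset.sum_sum, mul_comm] using h

lemma pc_ofCounts {N k : ℕ} {s : Finset ℕ} {n : ℕ → ℕ} (h : ∑ k ∈ s, k * n k = N) (hk : k ≠ 0) :
    pc (Nat.Partition.ofCounts s n h) k = if k ∈ s then n k else 0 := by
  rw [pc, Nat.Partition.ofCounts, Nat.Partition.count_ofSums_of_ne_zero _ hk, Multiset.count_sum']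
  simp [Multiset.count_replicate]

end Partitions

section BlockFactorization

variable {ι : Type*} [Fintype ι] {N : ℕ} {B : ι → Finset ℕ}

lemma sum_apply_eq_of_mem (hB : Pairwise (Disjoint on B)) {p : ι → ℕ → ℕ}
    (hp : ∀ i, ∀ k ∉ B i, p i k = 0) {i : ι} {k : ℕ} (hk : k ∈ B i) :
    (∑ j, p j) k = p i k := by
  rw [Finset.sum_apply, sum_eq_single i (fun j _ hji => hp j k (disjoint_left.1 (hB hji.symm) hk))
    (fun h => absurd (mem_univ i) h)]

lemma ofCounts_sum_piecewise_pc (hB : Pairwise (Disjoint on B))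
    (hcover : univ.biUnion B = Icc 1 N) (η : N.Partition)
    (h : ∑ k ∈ Icc 1 N, k * (∑ i, (B i).piecewise (pc η) 0) k = N) :
    Nat.Partition.ofCounts (Icc 1 N) (∑ i, (B i).piecewise (pc η) 0) h = η := by
  refine Nat.Partition.ext (Multiset.ext.2 fun k => ?_)
  change pc _ k = pc η k
  rcases eq_or_ne k 0 with rfl | hk0
  · rw [pc_zero, pc_zero]
  rw [pc_ofCounts h hk0]
  split_ifs with hk
  · obtain ⟨i, -, hki⟩ := mem_biUnion.1 (hcover ▸ hk)
    rw [sum_apply_eq_of_mem hB (fun j k hk => piecewise_eq_of_notMem _ _ _ hk) hki,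
      piecewise_eq_of_mem _ _ _ hki]
  · exact (pc_eq_zero_of_lt η (by simp only [mem_Icc, not_and, not_le] at hk; omega)).symm

lemma sum_Icc_mul_sum_apply (hcover : univ.biUnion B = Icc 1 N) {L K : ι → ℕ}
    {p : ι → ℕ → ℕ} (hp : ∀ i, p i ∈ countVectors (B i) (L i) (K i)) :
    ∑ k ∈ Icc 1 N, k * (∑ i, p i) k = ∑ i, K i := by
  calc ∑ k ∈ Icc 1 N, k * (∑ i, p i) k = ∑ i, ∑ k ∈ Icc 1 N, k * p i k := by
        simp_rw [Finset.sum_apply, mul_sum]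
        exact sum_comm
    _ = ∑ i, K i := sum_congr rfl fun i _ =>
        (sum_subset (f := fun k => k * p i k) (hcover ▸ subset_biUnion_of_mem B (mem_univ i))
          fun k _ hk => by rw [apply_eq_zero_of_mem_countVectors (hp i) hk, mul_zero]).symm.trans
        (mem_countVectors.1 (hp i)).2

theorem sum_filter_prod_pc_eq_prod_sum {R : Type*} [CommSemiring R] (w : ℕ → ℕ → R)
    (hB : Pairwise (Disjoint on B)) (hcover : univ.biUnion B = Icc 1 N) (L K : ι → ℕ)
    (hK : ∑ i, K i = N) :
    ∑ η ∈ univ.filter (fun η : N.Partition =>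
          ∀ i, ∑ k ∈ B i, pc η k = L i ∧ ∑ k ∈ B i, k * pc η k = K i),
        ∏ k ∈ Icc 1 N, w k (pc η k)
      = ∏ i, ∑ n ∈ countVectors (B i) (L i) (K i), ∏ k ∈ B i, w k (n k) := by
  set D := fun i => countVectors (B i) (L i) (K i)
  have hsub : ∀ i, B i ⊆ Icc 1 N := fun i => hcover ▸ subset_biUnion_of_mem B (mem_univ i)
  have hsupp : ∀ p ∈ Fintype.piFinset D, ∀ i, ∀ k ∉ B i, p i k = 0 := fun p hp i _ hk =>
    apply_eq_zero_of_mem_countVectors (Fintype.mem_piFinset.1 hp i) hk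
  have hmass : ∀ p ∈ Fintype.piFinset D, ∑ k ∈ Icc 1 N, k * (∑ i, p i) k = N := fun p hp =>
    (sum_Icc_mul_sum_apply hcover (Fintype.mem_piFinset.1 hp)).trans hK
  have hpc : ∀ p (hp : p ∈ Fintype.piFinset D) i, ∀ k ∈ B i,
      pc (Nat.Partition.ofCounts (Icc 1 N) (∑ i, p i) (hmass p hp)) k = p i k := by
    intro p hp i k hk
    rw [pc_ofCounts _ (Nat.one_le_iff_ne_zero.1 (mem_Icc.1 (hsub i hk)).1), if_pos (hsub i hk),
      sum_apply_eq_of_mem hB (hsupp p hp) hk]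
  rw [prod_univ_sum]
  refine sum_bij' (fun η _ i => (B i).piecewise (pc η) 0)
    (fun p hp => Nat.Partition.ofCounts (Icc 1 N) (∑ i, p i) (hmass p hp)) ?_ ?_ ?_ ?_ ?_
  · intro η hη
    refine Fintype.mem_piFinset.2 fun i => ?_
    obtain ⟨hL, hK⟩ := (mem_filter.1 hη).2 i
    exact hL ▸ hK ▸ piecewise_mem_countVectors _ _
  · intro p hp
    refine mem_filter.2 ⟨mem_univ _, fun i => ?_⟩
    obtain ⟨⟨hL, -⟩, hK⟩ := mem_countVectors.1 (Fintype.mem_piFinset.1 hp i)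
    refine ⟨(sum_congr rfl (hpc p hp i)).trans hL, (sum_congr rfl fun k hk => ?_).trans hK⟩
    rw [hpc p hp i k hk]
  · exact fun η _ => ofCounts_sum_piecewise_pc hB hcover η _
  · intro p hp
    funext i k
    by_cases hk : k ∈ B i
    · rw [piecewise_eq_of_mem _ _ _ hk, hpc p hp i k hk]
    · rw [piecewise_eq_of_notMem _ _ _ hk, hsupp p hp i k hk, Pi.zero_apply]
  · intro η _
    rw [← hcover, prod_biUnion (hB.set_pairwise _)]
    exact prod_congr rfl fun i _ => prod_congr rfl fun k hk =>
      (congrArg (w k) (piecewise_eq_of_mem _ _ _ hk)).symm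

end BlockFactorization

section ConsecutiveBlocks

variable {q : ℕ} {M : ℕ → ℕ}

lemma monotoneOn_Iic_of_lt_succ (hM : ∀ j, j ≤ q → M j < M (j + 1)) :
    MonotoneOn M (Set.Iic (q + 1)) :=
  (strictMonoOn_Iic_of_lt_succ fun j hj => by
    simpa using hM j (Nat.lt_succ_iff.1 hj)).monotoneOn

lemma pairwise_disjoint_Ico_max_one (hM : ∀ j, j ≤ q → M j < M (j + 1)) :
    Pairwise (Disjoint on fun i : Fin (q + 1) => Ico (max (M i) 1) (M (i + 1))) := by
  refine (pairwise_disjoint_on _).2 fun i j hij => disjoint_left.2 fun k hki hkj => ?_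
  have hle : M (i + 1) ≤ M j := monotoneOn_Iic_of_lt_succ hM
    (by simp only [Set.mem_Iic]; omega) (by simp only [Set.mem_Iic]; omega) (by omega)
  simp only [mem_Ico] at hki hkj
  omega

lemma biUnion_Ico_max_one (hM0 : M 0 = 0) (hM : ∀ j, j ≤ q → M j < M (j + 1)) :
    univ.biUnion (fun i : Fin (q + 1) => Ico (max (M i) 1) (M (i + 1))) = Ico 1 (M (q + 1)) := by
  ext k
  simp only [mem_biUnion, mem_univ, true_and, mem_Ico]
  constructor
  · rintro ⟨i, hi, hk⟩
    have hle : M (i + 1) ≤ M (q + 1) := monotoneOn_Iic_of_lt_succ hM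
      (by simp only [Set.mem_Iic]; omega) (by simp) (by omega)
    omega
  · rintro ⟨hk1, hk2⟩
    obtain ⟨i, hi, hk⟩ := Set.mem_iUnion₂.1
      (Ico_subset_biUnion_Ico (q + 1) M (Set.mem_Ico.2 ⟨by omega, hk2⟩))
    refine ⟨⟨i, mem_range.1 hi⟩, ?_, hk.2⟩
    simp only [Set.mem_Ico] at hk
    exact max_le hk.1 hk1

end ConsecutiveBlocks

theorem stmt4_general (N q : ℕ)
    (a : ℕ → ℝ) (ha : ∀ k, 0 < a k)
    (M : ℕ → ℕ) (hM0 : M 0 = 0) (hMlt : ∀ j, j ≤ q → M j < M (j + 1))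
    (hMtop : M (q + 1) = N + 1)
    (δ : ℕ → ℝ)
    (L Nv : ℕ → ℕ) (hNv : ∑ j ∈ Finset.range (q + 1), Nv j = N) :
    prob (gibbs a N) (fun η =>
        ∀ j, j ≤ q → nust (M j) (M (j + 1)) η = L j ∧ Kst (M j) (M (j + 1)) η = Nv j)
      = (cN a N)⁻¹ * ∏ j ∈ Finset.range (q + 1),
          (Sst a (δ j) (M j) (M (j + 1)) ^ L j / (Nat.factorial (L j) : ℝ) *
            Real.exp (δ j * (Nv j : ℝ)) *
            convPow (pmfY a (δ j) (M j) (M (j + 1))) (L j) (Nv j)) := by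
  set B : Fin (q + 1) → Finset ℕ := fun i => Ico (max (M i) 1) (M (i + 1))
  have hcover : univ.biUnion B = Icc 1 N := by
    rw [biUnion_Ico_max_one hM0 hMlt, hMtop, Ico_add_one_right_eq_Icc]
  have hevent : ∀ η : N.Partition,
      (∀ j, j ≤ q → nust (M j) (M (j + 1)) η = L j ∧ Kst (M j) (M (j + 1)) η = Nv j) ↔
        ∀ i, ∑ k ∈ B i, pc η k = L i ∧ ∑ k ∈ B i, k * pc η k = Nv i := fun η => by
    simp only [Fin.forall_iff, Nat.lt_succ_iff, B, nust, Kst,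
      sum_Ico_max_one (pc_zero η), sum_Ico_max_one (g := fun k => k * pc η k) (by simp [pc_zero])]
  have hK : ∑ i : Fin (q + 1), Nv i = N := by rw [Fin.sum_univ_eq_sum_range, hNv]
  simp only [prob, hevent, gibbs, ← mul_sum, wgt]
  rw [← Fin.prod_univ_eq_prod_range,
    Fintype.prod_congr _ _ fun i => Sst_pow_mul_convPow_pmfY ha _ _ _ _ _]
  congr 1
  -- the two filters differ only in their decidability instances
  convert sum_filter_prod_pc_eq_prod_sum (B := B) (fun k c => a k ^ c / (c ! : ℝ))
    (pairwise_disjoint_Ico_max_one hMlt) hcover (fun i => L i) (fun i => Nv i) hK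

/-- Khintchine-type representation formula for the joint distribution of the
stratified counts `ν_j*` and masses `K_j*` under the Gibbs measure. -/
theorem stmt4 (N q : ℕ) (hN : 1 ≤ N)
    (a : ℕ → ℝ) (ha : ∀ k, 0 < a k)
    (M : ℕ → ℕ) (hM0 : M 0 = 0) (hMlt : ∀ j, j ≤ q → M j < M (j + 1))
    (hMtop : M (q + 1) = N + 1)
    (δ : ℕ → ℝ) (hδ : ∀ j, j ≤ q → 0 < δ j)
    (L Nv : ℕ → ℕ) (hNv : ∑ j ∈ Finset.range (q + 1), Nv j = N) :
    prob (gibbs a N) (fun η =>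
        ∀ j, j ≤ q → nust (M j) (M (j + 1)) η = L j ∧ Kst (M j) (M (j + 1)) η = Nv j)
      = (cN a N)⁻¹ * ∏ j ∈ Finset.range (q + 1),
          (Sst a (δ j) (M j) (M (j + 1)) ^ L j / (Nat.factorial (L j) : ℝ) *
            Real.exp (δ j * (Nv j : ℝ)) *
            convPow (pmfY a (δ j) (M j) (M (j + 1))) (L j) (Nv j)) :=
  stmt4_general N q a ha M hM0 hMlt hMtop δ L Nv hNv
end
end

section
/- Let p > 0, C > 0 and 0 ≤ u < u' ≤ ∞, and set f(s) = C·∫_u^{u'} x^s·e^{−x} dx for s > −1. Then f(p+1)·f(p−1) − f(p)² > 0 and f(p+2)·f(p−1) − f(p+1)·f(p) > 0. -/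
open scoped Classical BigOperators Topology
open Filter MeasureTheory Finset

noncomputable section

/-- `f(s) = C·∫_u^{u'} x^s·e^{-x} dx` (with `u' ≤ ∞`). -/
def fInt (C u : ℝ) (u' : EReal) (s : ℝ) : ℝ :=
  C * ∫ x in {x : ℝ | u < x ∧ (x : EReal) < u'}, x ^ s * Real.exp (-x)

namespace Stmt14Aux

open Set

lemma integ {S : Set ℝ} (hS : S ⊆ Set.Ioi 0) {s : ℝ} (hs : -1 < s) :
    IntegrableOn (fun x => x ^ s * Real.exp (-x)) S := by
  have h := Real.GammaIntegral_convergent (s := s + 1) (by linarith)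
  simp only [add_sub_cancel_right] at h
  have h2 : IntegrableOn (fun x => x ^ s * Real.exp (-x)) (Set.Ioi 0) := by
    simpa [mul_comm] using h
  exact h2.mono_set hS

lemma Jpos {S : Set ℝ} (hm : MeasurableSet S) (hS : S ⊆ Set.Ioi 0)
    (hv : 0 < volume S) {s : ℝ} (hs : -1 < s) :
    0 < ∫ x in S, x ^ s * Real.exp (-x) := by
  rw [setIntegral_pos_iff_support_of_nonneg_ae ?_ (integ hS hs)]
  · refine lt_of_lt_of_le hv (measure_mono ?_)
    intro x hx
    have hx0 : (0 : ℝ) < x := hS hx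
    refine ⟨?_, hx⟩
    have : (0 : ℝ) < x ^ s * Real.exp (-x) := by positivity
    exact Function.mem_support.mpr this.ne'
  · filter_upwards [ae_restrict_mem hm] with x hx
    have hx0 : (0 : ℝ) < x := hS hx
    positivity

lemma key (p : ℝ) (hp : 0 < p) {S : Set ℝ} (hm : MeasurableSet S)
    (hS : S ⊆ Set.Ioi 0) (hv : 0 < volume S) :
    0 < (∫ x in S, x ^ (p+1) * Real.exp (-x)) * (∫ x in S, x ^ (p-1) * Real.exp (-x))
        - (∫ x in S, x ^ p * Real.exp (-x)) ^ 2 ∧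
    0 < (∫ x in S, x ^ (p+2) * Real.exp (-x)) * (∫ x in S, x ^ (p-1) * Real.exp (-x))
        - (∫ x in S, x ^ (p+1) * Real.exp (-x)) * (∫ x in S, x ^ p * Real.exp (-x)) := by
  set J : ℝ → ℝ := fun s => ∫ x in S, x ^ s * Real.exp (-x) with hJ
  have hint : ∀ s : ℝ, -1 < s → IntegrableOn (fun x => x ^ s * Real.exp (-x)) S :=
    fun s hs => integ hS hs
  have hJ0 : 0 < J (p-1) := Jpos hm hS hv (by linarith)
  have hJ1 : 0 < J p := Jpos hm hS hv (by linarith)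
  set m : ℝ := J p / J (p-1) with hmdef
  have hm0 : 0 < m := div_pos hJ1 hJ0
  -- pointwise identities on S
  have hpt : ∀ x ∈ S, x ^ p = x ^ (p-1) * x ∧ x ^ (p+1) = x ^ (p-1) * x * x ∧
      x ^ (p+2) = x ^ (p-1) * x * x * x := by
    intro x hx
    have hx0 : (0 : ℝ) < x := hS hx
    have e1 : x ^ p = x ^ (p-1) * x := by
      rw [← Real.rpow_add_one hx0.ne' (p-1)]; norm_num
    have e2 : x ^ (p+1) = x ^ p * x := Real.rpow_add_one hx0.ne' p
    have e3 : x ^ (p+2) = x ^ (p+1) * x := by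
      rw [← Real.rpow_add_one hx0.ne' (p+1)]; ring_nf
    exact ⟨e1, by rw [e2, e1], by rw [e3, e2, e1]⟩
  -- first auxiliary integral
  have heq2 : Set.EqOn
      (fun x : ℝ => x ^ (p+1) * Real.exp (-x) - (2*m) * (x ^ p * Real.exp (-x))
            + m^2 * (x ^ (p-1) * Real.exp (-x)))
      (fun x : ℝ => (x - m) ^ 2 * (x ^ (p-1) * Real.exp (-x))) S := by
    intro x hx
    obtain ⟨e1, e2, _⟩ := hpt x hx
    simp only
    rw [e1, e2]; ring
  have hcomb2 : IntegrableOn (fun x : ℝ => x ^ (p+1) * Real.exp (-x)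
      - (2*m) * (x ^ p * Real.exp (-x)) + m^2 * (x ^ (p-1) * Real.exp (-x))) S :=
    ((hint (p+1) (by linarith)).sub ((hint p (by linarith)).const_mul _)).add
      ((hint (p-1) (by linarith)).const_mul _)
  have hI2 : IntegrableOn (fun x : ℝ => (x - m) ^ 2 * (x ^ (p-1) * Real.exp (-x))) S :=
    hcomb2.congr_fun heq2 hm
  have hK2eq : (∫ x in S, (x - m) ^ 2 * (x ^ (p-1) * Real.exp (-x)))
      = J (p+1) - (2*m) * J p + m^2 * J (p-1) := by
    rw [← setIntegral_congr_fun hm heq2, integral_add, integral_sub, integral_const_mul,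
      integral_const_mul]
    · exact hint (p+1) (by linarith)
    · exact (hint p (by linarith)).const_mul _
    · exact ((hint (p+1) (by linarith)).sub ((hint p (by linarith)).const_mul _))
    · exact (hint (p-1) (by linarith)).const_mul _
  -- second auxiliary integral
  have heq3 : Set.EqOn
      (fun x : ℝ => x ^ (p+2) * Real.exp (-x) - m * (x ^ (p+1) * Real.exp (-x))
            - m^2 * (x ^ p * Real.exp (-x)) + m^3 * (x ^ (p-1) * Real.exp (-x)))
      (fun x : ℝ => (x - m) ^ 2 * (x + m) * (x ^ (p-1) * Real.exp (-x))) S := by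
    intro x hx
    obtain ⟨e1, e2, e3⟩ := hpt x hx
    simp only
    rw [e1, e2, e3]; ring
  have hcomb3 : IntegrableOn (fun x : ℝ => x ^ (p+2) * Real.exp (-x)
      - m * (x ^ (p+1) * Real.exp (-x)) - m^2 * (x ^ p * Real.exp (-x))
      + m^3 * (x ^ (p-1) * Real.exp (-x))) S :=
    (((hint (p+2) (by linarith)).sub ((hint (p+1) (by linarith)).const_mul _)).sub
      ((hint p (by linarith)).const_mul _)).add ((hint (p-1) (by linarith)).const_mul _)
  have hI3 : IntegrableOn (fun x : ℝ => (x - m) ^ 2 * (x + m) * (x ^ (p-1) * Real.exp (-x))) S :=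
    hcomb3.congr_fun heq3 hm
  have hK3eq : (∫ x in S, (x - m) ^ 2 * (x + m) * (x ^ (p-1) * Real.exp (-x)))
      = J (p+2) - m * J (p+1) - m^2 * J p + m^3 * J (p-1) := by
    rw [← setIntegral_congr_fun hm heq3, integral_add, integral_sub, integral_sub,
      integral_const_mul, integral_const_mul, integral_const_mul]
    · exact hint (p+2) (by linarith)
    · exact (hint (p+1) (by linarith)).const_mul _
    · exact ((hint (p+2) (by linarith)).sub ((hint (p+1) (by linarith)).const_mul _))
    · exact (hint p (by linarith)).const_mul _
    · exact (((hint (p+2) (by linarith)).sub ((hint (p+1) (by linarith)).const_mul _)).sub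
        ((hint p (by linarith)).const_mul _))
    · exact (hint (p-1) (by linarith)).const_mul _
  -- positivity of the auxiliary integrals
  have hvol : 0 < volume (S \ {m}) := by
    rwa [measure_diff_null (measure_singleton m)]
  have hK2pos : 0 < ∫ x in S, (x - m) ^ 2 * (x ^ (p-1) * Real.exp (-x)) := by
    rw [setIntegral_pos_iff_support_of_nonneg_ae ?_ hI2]
    · refine lt_of_lt_of_le hvol (measure_mono ?_)
      rintro x ⟨hx, hxm⟩
      have hx0 : (0 : ℝ) < x := hS hx
      have h1 : (0 : ℝ) < (x - m) ^ 2 :=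
        sq_pos_of_ne_zero (sub_ne_zero.mpr (fun h => hxm h))
      have h2 : (0 : ℝ) < x ^ (p-1) * Real.exp (-x) := by positivity
      exact ⟨Function.mem_support.mpr (mul_pos h1 h2).ne', hx⟩
    · filter_upwards [ae_restrict_mem hm] with x hx
      have hx0 : (0 : ℝ) < x := hS hx
      positivity
  have hK3pos : 0 < ∫ x in S, (x - m) ^ 2 * (x + m) * (x ^ (p-1) * Real.exp (-x)) := by
    rw [setIntegral_pos_iff_support_of_nonneg_ae ?_ hI3]
    · refine lt_of_lt_of_le hvol (measure_mono ?_)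
      rintro x ⟨hx, hxm⟩
      have hx0 : (0 : ℝ) < x := hS hx
      have h1 : (0 : ℝ) < (x - m) ^ 2 :=
        sq_pos_of_ne_zero (sub_ne_zero.mpr (fun h => hxm h))
      have h1' : (0 : ℝ) < x + m := by linarith
      have h2 : (0 : ℝ) < x ^ (p-1) * Real.exp (-x) := by positivity
      exact ⟨Function.mem_support.mpr (mul_pos (mul_pos h1 h1') h2).ne', hx⟩
    · filter_upwards [ae_restrict_mem hm] with x hx
      have hx0 : (0 : ℝ) < x := hS hx
      have h1' : (0 : ℝ) < x + m := by linarith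
      positivity
  constructor
  · have h := mul_pos hJ0 hK2pos
    have hid : J (p-1) * (∫ x in S, (x - m) ^ 2 * (x ^ (p-1) * Real.exp (-x)))
        = J (p+1) * J (p-1) - J p ^ 2 := by
      rw [hK2eq, hmdef]; field_simp; ring
    rwa [hid] at h
  · have h := mul_pos hJ0 hK3pos
    have hid : J (p-1) * (∫ x in S, (x - m) ^ 2 * (x + m) * (x ^ (p-1) * Real.exp (-x)))
        = J (p+2) * J (p-1) - J (p+1) * J p := by
      rw [hK3eq, hmdef]; field_simp; ring
    rwa [hid] at h

end Stmt14Aux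

/-- two Cauchy–Schwarz-type inequalities for the moments
`f(s) = C·∫_u^{u'} x^s e^{-x} dx`. -/
theorem stmt14 (p C : ℝ) (hp : 0 < p) (hC : 0 < C)
    (u : ℝ) (u' : EReal) (hu : 0 ≤ u) (huu' : (u : EReal) < u') :
    0 < fInt C u u' (p + 1) * fInt C u u' (p - 1) - fInt C u u' p ^ 2 ∧
    0 < fInt C u u' (p + 2) * fInt C u u' (p - 1) - fInt C u u' (p + 1) * fInt C u u' p := by
  have hkey : 0 < (∫ x in {x : ℝ | u < x ∧ (x : EReal) < u'}, x ^ (p+1) * Real.exp (-x)) *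
        (∫ x in {x : ℝ | u < x ∧ (x : EReal) < u'}, x ^ (p-1) * Real.exp (-x))
        - (∫ x in {x : ℝ | u < x ∧ (x : EReal) < u'}, x ^ p * Real.exp (-x)) ^ 2 ∧
      0 < (∫ x in {x : ℝ | u < x ∧ (x : EReal) < u'}, x ^ (p+2) * Real.exp (-x)) *
        (∫ x in {x : ℝ | u < x ∧ (x : EReal) < u'}, x ^ (p-1) * Real.exp (-x))
        - (∫ x in {x : ℝ | u < x ∧ (x : EReal) < u'}, x ^ (p+1) * Real.exp (-x)) *
          (∫ x in {x : ℝ | u < x ∧ (x : EReal) < u'}, x ^ p * Real.exp (-x)) := by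
    induction u' using EReal.rec with
    | bot => exact absurd huu' (by simp)
    | coe b =>
      have hub : u < b := by exact_mod_cast huu'
      have hSet : {x : ℝ | u < x ∧ (x : EReal) < (b : EReal)} = Set.Ioo u b := by
        ext x; simp [Set.mem_Ioo, EReal.coe_lt_coe_iff]
      rw [hSet]
      refine Stmt14Aux.key p hp measurableSet_Ioo ?_ ?_
      · intro x hx; exact lt_of_le_of_lt hu hx.1
      · rw [Real.volume_Ioo]
        simp [sub_pos.mpr hub]
    | top =>
      have hSet : {x : ℝ | u < x ∧ (x : EReal) < (⊤ : EReal)} = Set.Ioi u := by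
        ext x; simp
      rw [hSet]
      refine Stmt14Aux.key p hp measurableSet_Ioi ?_ ?_
      · intro x hx; exact lt_of_le_of_lt hu hx
      · rw [Real.volume_Ioi]; exact ENNReal.zero_lt_top
  obtain ⟨h1, h2⟩ := hkey
  unfold fInt
  constructor
  · have : C * (∫ x in {x : ℝ | u < x ∧ (x : EReal) < u'}, x ^ (p+1) * Real.exp (-x)) *
        (C * ∫ x in {x : ℝ | u < x ∧ (x : EReal) < u'}, x ^ (p-1) * Real.exp (-x))
        - (C * ∫ x in {x : ℝ | u < x ∧ (x : EReal) < u'}, x ^ p * Real.exp (-x)) ^ 2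
        = C ^ 2 * ((∫ x in {x : ℝ | u < x ∧ (x : EReal) < u'}, x ^ (p+1) * Real.exp (-x)) *
        (∫ x in {x : ℝ | u < x ∧ (x : EReal) < u'}, x ^ (p-1) * Real.exp (-x))
        - (∫ x in {x : ℝ | u < x ∧ (x : EReal) < u'}, x ^ p * Real.exp (-x)) ^ 2) := by ring
    rw [this]
    exact mul_pos (pow_pos hC 2) h1
  · have : C * (∫ x in {x : ℝ | u < x ∧ (x : EReal) < u'}, x ^ (p+2) * Real.exp (-x)) *
        (C * ∫ x in {x : ℝ | u < x ∧ (x : EReal) < u'}, x ^ (p-1) * Real.exp (-x))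
        - C * (∫ x in {x : ℝ | u < x ∧ (x : EReal) < u'}, x ^ (p+1) * Real.exp (-x)) *
          (C * ∫ x in {x : ℝ | u < x ∧ (x : EReal) < u'}, x ^ p * Real.exp (-x))
        = C ^ 2 * ((∫ x in {x : ℝ | u < x ∧ (x : EReal) < u'}, x ^ (p+2) * Real.exp (-x)) *
        (∫ x in {x : ℝ | u < x ∧ (x : EReal) < u'}, x ^ (p-1) * Real.exp (-x))
        - (∫ x in {x : ℝ | u < x ∧ (x : EReal) < u'}, x ^ (p+1) * Real.exp (-x)) *
          (∫ x in {x : ℝ | u < x ∧ (x : EReal) < u'}, x ^ p * Real.exp (-x))) := by ring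
    rw [this]
    exact mul_pos (pow_pos hC 2) h2
end
end

section
/- Let x ∈ ℝ and γ ∈ (0,∞). Let (S_n) and (T_n) be sequences of positive reals with S_n → ∞ and T_n/S_n → γ, and let (L_n) be positive integers with (L_n − S_n)/√T_n → x. Then L_n! / (√(2π·S_n) · S_n^{L_n} · e^{−S_n} · e^{x²·T_n/(2·S_n)}) → 1 as n → ∞. -/
/-!
By Stirling's formula `L! ~ √(2πL) (L/e)^L`, and the quotient of this by
`√(2πS) S^L e^{-S} e^c` is `√(L/S) · exp (L log (L/S) - (L - S) - c)`. Writing `L = S (1 + δ)`,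
the expansion `(1 + δ) log (1 + δ) = δ + δ²/2 + O(δ³)` gives
`L log (L/S) - (L - S) = (L - S)²/(2S) + O(|L - S|³/S²)`. With `ξ = (L - S)/√T → x` and
`T/S → γ`, the error is `|δ| ξ² T/S → 0`, and `(L - S)²/(2S) - x²T/(2S) = (ξ² - x²) T/(2S) → 0`.
-/

open scoped Topology
open Filter Finset Real Asymptotics

theorem abs_one_add_mul_log_one_add_sub_le {d : ℝ} (hd : |d| ≤ 1 / 2) :
    |(1 + d) * log (1 + d) - d - d ^ 2 / 2| ≤ 4 * |d| ^ 3 := by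
  set E := log (1 + d) - d + d ^ 2 / 2
  have hE : |E| ≤ 2 * |d| ^ 3 := by
    have h := abs_log_sub_add_sum_range_le (x := -d) (by rw [abs_neg]; linarith) 2
    norm_num [sum_range_succ] at h
    calc |E| = |-d + d ^ 2 / 2 + log (1 + d)| := by congr 1; ring
      _ ≤ |d| ^ 3 / (1 - |d|) := h
      _ ≤ 2 * |d| ^ 3 := by
            rw [div_le_iff₀ (by linarith)]; nlinarith [pow_nonneg (abs_nonneg d) 3]
  have h1d : |1 + d| ≤ 3 / 2 := by rw [abs_le] at hd ⊢; constructor <;> linarith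
  calc |(1 + d) * log (1 + d) - d - d ^ 2 / 2| = |(1 + d) * E - d ^ 3 / 2| := by
          congr 1; simp only [E]; ring
    _ ≤ |1 + d| * |E| + |d| ^ 3 / 2 := by
          refine (abs_sub _ _).trans_eq ?_; rw [abs_mul, abs_div, abs_pow]; norm_num
    _ ≤ 3 / 2 * (2 * |d| ^ 3) + |d| ^ 3 / 2 := by gcongr
    _ ≤ 4 * |d| ^ 3 := by linarith [pow_nonneg (abs_nonneg d) 3]

theorem stirling_approx_div_eq (n : ℕ) {S : ℝ} (hS : 0 < S) (c : ℝ) :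
    √(2 * n * π) * (n / exp 1) ^ n / (√(2 * π * S) * S ^ n * exp (-S) * exp c) =
      √(n / S) * exp (n * log (n / S) - (n - S) - c) := by
  rcases Nat.eq_zero_or_pos n with rfl | hn
  · simp
  have hnS : 0 < (n : ℝ) / S := by positivity
  rw [exp_sub, exp_sub, exp_nat_mul, exp_log hnS, exp_neg, div_pow, div_pow,
    ← exp_nat_mul, mul_one, sqrt_div' _ hS.le, show 2 * n * π = n * (2 * π) by ring,
    sqrt_mul (Nat.cast_nonneg n), sqrt_mul (by positivity) S]
  have : 0 < √(2 * π) := by positivity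
  have : 0 < √S := by positivity
  field_simp
  rw [← exp_add, add_sub_cancel]

theorem tendsto_mul_log_div_sub_sub_sq_div {α : Type*} {l : Filter α} {L S : α → ℝ}
    (hS : ∀ᶠ n in l, 0 < S n) (hδ : Tendsto (fun n => (L n - S n) / S n) l (𝓝 0))
    (h3 : Tendsto (fun n => |L n - S n| ^ 3 / S n ^ 2) l (𝓝 0)) :
    Tendsto (fun n => L n * log (L n / S n) - (L n - S n) - (L n - S n) ^ 2 / (2 * S n))
      l (𝓝 0) := by
  refine squeeze_zero_norm' ?_ (by simpa using h3.const_mul 4)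
  filter_upwards [hS, hδ.norm.eventually (eventually_le_nhds (by norm_num : ‖(0 : ℝ)‖ < 1 / 2))]
    with n hSn hδn
  set d := (L n - S n) / S n
  have hL : L n = S n * (1 + d) := by rw [mul_one_add, mul_div_cancel₀ _ hSn.ne']; ring
  have key : L n * log (L n / S n) - (L n - S n) - (L n - S n) ^ 2 / (2 * S n) =
      S n * ((1 + d) * log (1 + d) - d - d ^ 2 / 2) := by
    rw [show L n / S n = 1 + d by rw [hL]; field_simp, hL]; field_simp; ring
  have hd3 : |L n - S n| ^ 3 / S n ^ 2 = S n * |d| ^ 3 := by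
    rw [abs_div, abs_of_pos hSn]; field_simp
  rw [key, norm_mul, Real.norm_of_nonneg hSn.le, hd3, Real.norm_eq_abs]
  nlinarith [abs_one_add_mul_log_one_add_sub_le hδn]

theorem tendsto_factorial_div_of_tendsto_sub_sq_div {α : Type*} {l : Filter α} {L : α → ℕ}
    {S c : α → ℝ} (hS : Tendsto S l atTop)
    (hδ : Tendsto (fun n => (L n - S n) / S n) l (𝓝 0))
    (h3 : Tendsto (fun n => |L n - S n| ^ 3 / S n ^ 2) l (𝓝 0))
    (hc : Tendsto (fun n => (L n - S n) ^ 2 / (2 * S n) - c n) l (𝓝 0)) :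
    Tendsto (fun n => ((L n).factorial : ℝ) /
      (√(2 * π * S n) * S n ^ L n * exp (-S n) * exp (c n))) l (𝓝 1) := by
  have hSpos : ∀ᶠ n in l, 0 < S n := hS.eventually_gt_atTop 0
  have hLS : Tendsto (fun n => (L n : ℝ) / S n) l (𝓝 1) := by
    have h := hδ.const_add 1
    rw [add_zero] at h
    refine h.congr' ?_
    filter_upwards [hSpos] with n hn
    field_simp; ring
  have hL : Tendsto L l atTop := by
    refine tendsto_natCast_atTop_iff.mp (tendsto_atTop_mono' _ ?_ (hS.atTop_div_const two_pos))
    filter_upwards [hSpos, hLS.eventually (eventually_ge_nhds one_half_lt_one)] with n hSn hn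
    rw [le_div_iff₀ hSn] at hn
    linarith
  have hstirling : Tendsto (fun n => √(2 * L n * π) * (L n / exp 1) ^ L n /
      (√(2 * π * S n) * S n ^ L n * exp (-S n) * exp (c n))) l (𝓝 1) := by
    have hlog := (tendsto_mul_log_div_sub_sub_sq_div hSpos hδ h3).add hc
    rw [add_zero] at hlog
    have h := hLS.sqrt.mul (tendsto_exp_nhds_zero_nhds_one.comp hlog)
    rw [sqrt_one, one_mul] at h
    refine h.congr' ?_
    filter_upwards [hSpos] with n hn
    rw [stirling_approx_div_eq _ hn, Function.comp_apply, sub_add_sub_cancel]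
  have hD : ∀ᶠ n in l, √(2 * π * S n) * S n ^ L n * exp (-S n) * exp (c n) ≠ 0 := by
    filter_upwards [hSpos] with n hn
    positivity
  exact (isEquivalent_iff_tendsto_one hD).mp
    ((Stirling.factorial_isEquivalent_stirling.comp_tendsto hL).trans
      (isEquivalent_of_tendsto_one hstirling))

theorem tendsto_sqrt_div_of_tendsto_div {α : Type*} {l : Filter α} {S T : α → ℝ} {γ : ℝ}
    (hS : Tendsto S l atTop) (hTS : Tendsto (fun n => T n / S n) l (𝓝 γ)) :
    Tendsto (fun n => √(T n) / S n) l (𝓝 0) := by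
  have h := (hTS.mul hS.inv_tendsto_atTop).sqrt
  rw [mul_zero, sqrt_zero] at h
  refine h.congr' ?_
  filter_upwards [hS.eventually_gt_atTop 0] with n hn
  rw [Pi.inv_apply, ← div_eq_mul_inv, div_div, sqrt_div' _ (by positivity), ← sq,
    sqrt_sq hn.le]

theorem stmt15_general (x γ : ℝ)
    (S T : ℕ → ℝ) (hT : ∀ n, 0 < T n)
    (hStop : Tendsto S atTop atTop)
    (hTS : Tendsto (fun n => T n / S n) atTop (𝓝 γ))
    (L : ℕ → ℕ)
    (hx : Tendsto (fun n => ((L n : ℝ) - S n) / Real.sqrt (T n)) atTop (𝓝 x)) :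
    Tendsto (fun n => (Nat.factorial (L n) : ℝ) /
        (Real.sqrt (2 * Real.pi * S n) * S n ^ L n * Real.exp (-S n) *
          Real.exp (x ^ 2 * T n / (2 * S n))))
      atTop (𝓝 1) := by
  set ξ := fun n => ((L n : ℝ) - S n) / √(T n)
  have hsq (n : ℕ) : ((L n : ℝ) - S n) ^ 2 = ξ n ^ 2 * T n := by
    rw [div_pow, sq_sqrt (hT n).le, div_mul_cancel₀ _ (hT n).ne']
  have hSpos : ∀ᶠ n in atTop, 0 < S n := hStop.eventually_gt_atTop 0
  have hδ : Tendsto (fun n => ((L n : ℝ) - S n) / S n) atTop (𝓝 0) := by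
    have h := hx.mul (tendsto_sqrt_div_of_tendsto_div hStop hTS)
    rw [mul_zero] at h
    refine h.congr fun n => ?_
    rw [div_mul_div_cancel₀ (sqrt_pos.2 (hT n)).ne']
  have h3 : Tendsto (fun n => |(L n : ℝ) - S n| ^ 3 / S n ^ 2) atTop (𝓝 0) := by
    have h := hδ.abs.mul ((hx.pow 2).mul hTS)
    rw [abs_zero, zero_mul] at h
    refine h.congr' ?_
    filter_upwards [hSpos] with n hn
    rw [← mul_div_assoc, ← hsq, abs_div, abs_of_pos hn, ← sq_abs]
    field_simp
  have hc : Tendsto (fun n => ((L n : ℝ) - S n) ^ 2 / (2 * S n) - x ^ 2 * T n / (2 * S n))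
      atTop (𝓝 0) := by
    have h := (((hx.pow 2).sub_const (x ^ 2)).mul hTS).div_const 2
    rw [sub_self, zero_mul, zero_div] at h
    refine h.congr fun n => ?_
    rw [hsq]
    ring
  exact tendsto_factorial_div_of_tendsto_sub_sq_div hStop hδ h3 hc

/-- Stirling-type asymptotics for `L_n!` when `(L_n - S_n)/√T_n → x`,
`S_n → ∞` and `T_n/S_n → γ`. -/
theorem stmt15 (x γ : ℝ) (hγ : 0 < γ)
    (S T : ℕ → ℝ) (hS : ∀ n, 0 < S n) (hT : ∀ n, 0 < T n)
    (hStop : Tendsto S atTop atTop)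
    (hTS : Tendsto (fun n => T n / S n) atTop (𝓝 γ))
    (L : ℕ → ℕ) (hL : ∀ n, 0 < L n)
    (hx : Tendsto (fun n => ((L n : ℝ) - S n) / Real.sqrt (T n)) atTop (𝓝 x)) :
    Tendsto (fun n => (Nat.factorial (L n) : ℝ) /
        (Real.sqrt (2 * Real.pi * S n) * S n ^ L n * Real.exp (-S n) *
          Real.exp (x ^ 2 * T n / (2 * S n))))
      atTop (𝓝 1) :=
  stmt15_general x γ S T hT hStop hTS L hx
end

section
/- For every p > 0 and every ρ ∈ [0,1): p(p+2)·(1−ρ^{p+1})² < (p+1)²·(1−ρ^p)·(1−ρ^{p+2}); equivalently, α(ρ) := (√(p(p+2))/(p+1))·(1−ρ^{p+1})/√((1−ρ^p)·(1−ρ^{p+2})) satisfies 0 < α(ρ) < 1. Moreover Γ(p+1)²/(Γ(p)·Γ(p+2)) = p/(p+1), which also lies in (0,1). -/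
open scoped Classical BigOperators Topology
open Filter Finset

noncomputable section

lemma aux_sinh_lt (y : ℝ) (hy : 0 < y) : Real.sinh y < y * Real.cosh y := by
  have h : StrictMonoOn (fun x : ℝ => x * Real.cosh x - Real.sinh x) (Set.Ici 0) := by
    apply strictMonoOn_of_deriv_pos (convex_Ici _)
    · exact ((continuous_id.mul Real.continuous_cosh).sub Real.continuous_sinh).continuousOn
    · intro x hx
      rw [interior_Ici, Set.mem_Ioi] at hx
      have hd : HasDerivAt (fun x : ℝ => x * Real.cosh x - Real.sinh x)
          (1 * Real.cosh x + x * Real.sinh x - Real.cosh x) x :=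
        ((hasDerivAt_id x).mul (Real.hasDerivAt_cosh x)).sub (Real.hasDerivAt_sinh x)
      rw [hd.deriv]
      have := Real.sinh_pos_iff.mpr hx
      nlinarith
  have := h (Set.self_mem_Ici) (Set.mem_Ici.mpr hy.le) hy
  simp at this
  linarith

lemma aux_sinh_mul (q y : ℝ) (hq : 1 < q) (hy : 0 < y) :
    q * Real.sinh y < Real.sinh (q * y) := by
  have key : Real.sinh (q * y) = Real.sinh ((q - 1) * y) * Real.cosh y
      + Real.cosh ((q - 1) * y) * Real.sinh y := by
    rw [← Real.sinh_add]; ring_nf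
  have h1 : (q - 1) * y ≤ Real.sinh ((q - 1) * y) :=
    Real.self_le_sinh_iff.mpr (mul_nonneg (by linarith) hy.le)
  have h2 : Real.sinh y < y * Real.cosh y := aux_sinh_lt y hy
  have h3 : 1 ≤ Real.cosh ((q - 1) * y) := Real.one_le_cosh _
  have h4 : 0 < Real.sinh y := Real.sinh_pos_iff.mpr hy
  have h5 : 0 < Real.cosh y := Real.cosh_pos y
  have hq1 : 0 < q - 1 := by linarith
  rw [key]
  nlinarith

lemma aux_key (p y : ℝ) (hp : 0 < p) (hy : 0 < y) :
    p * (p + 2) * Real.sinh y ^ 2 < Real.sinh (p * y) * Real.sinh ((p + 2) * y) := by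
  have prod : Real.sinh (p * y) * Real.sinh ((p + 2) * y)
      = Real.sinh ((p + 1) * y) ^ 2 - Real.sinh y ^ 2 := by
    have c1 : Real.cosh ((p*y) + ((p+2)*y)) = Real.cosh (p*y) * Real.cosh ((p+2)*y)
        + Real.sinh (p*y) * Real.sinh ((p+2)*y) := Real.cosh_add _ _
    have c2 : Real.cosh (((p+2)*y) - (p*y)) = Real.cosh ((p+2)*y) * Real.cosh (p*y)
        - Real.sinh ((p+2)*y) * Real.sinh (p*y) := Real.cosh_sub _ _
    have e1 : (p*y) + ((p+2)*y) = 2 * ((p+1)*y) := by ring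
    have e2 : ((p+2)*y) - (p*y) = 2 * y := by ring
    rw [e1, Real.cosh_two_mul] at c1
    rw [e2, Real.cosh_two_mul] at c2
    have s1 := Real.cosh_sq ((p+1)*y)
    have s2 := Real.cosh_sq y
    nlinarith [c1, c2, s1, s2]
  have h := aux_sinh_mul (p + 1) y (by linarith) hy
  have hs : 0 < Real.sinh y := Real.sinh_pos_iff.mpr hy
  rw [prod]
  have hsq : ((p + 1) * Real.sinh y) ^ 2 < Real.sinh ((p + 1) * y) ^ 2 :=
    pow_lt_pow_left₀ h (by positivity) two_ne_zero
  nlinarith [hsq]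

lemma aux_rho (p ρ : ℝ) (hp : 0 < p) (hρ0 : 0 < ρ) (hρ1 : ρ < 1) :
    p * (p + 2) * ρ ^ p * (1 - ρ) ^ 2 < (1 - ρ ^ p) * (1 - ρ ^ (p + 2)) := by
  set y : ℝ := -Real.log ρ / 2 with hy_def
  have hlog : Real.log ρ < 0 := Real.log_neg hρ0 hρ1
  have hy : 0 < y := by rw [hy_def]; linarith
  have hρq : ∀ q : ℝ, ρ ^ q = Real.exp (-(2 * (q * y))) := by
    intro q
    rw [Real.rpow_def_of_pos hρ0]
    congr 1
    rw [hy_def]; ring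
  have hsinh : ∀ q : ℝ, 1 - ρ ^ q = 2 * Real.exp (-(q * y)) * Real.sinh (q * y) := by
    intro q
    rw [hρq q, Real.sinh_eq]
    have h2 : Real.exp (-(2 * (q * y))) = Real.exp (-(q*y)) * Real.exp (-(q*y)) := by
      rw [← Real.exp_add]; congr 1; ring
    rw [h2, Real.exp_neg]
    have := Real.exp_ne_zero (q * y)
    field_simp
  have key := aux_key p y hp hy
  have h1 := hsinh p
  have h2 := hsinh (p + 2)
  have h3 := hsinh 1
  rw [Real.rpow_one, one_mul] at h3
  rw [h1, h2, h3, hρq p]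
  have eqL : p * (p+2) * Real.exp (-(2*(p*y))) * (2 * Real.exp (-y) * Real.sinh y)^2
      = 4 * Real.exp (-(2*(p*y)) + (-y + -y)) * (p * (p+2) * Real.sinh y ^ 2) := by
    rw [Real.exp_add, Real.exp_add]; ring
  have eqR : (2 * Real.exp (-(p*y)) * Real.sinh (p*y))
        * (2 * Real.exp (-((p+2)*y)) * Real.sinh ((p+2)*y))
      = 4 * Real.exp (-(p*y) + -((p+2)*y)) * (Real.sinh (p*y) * Real.sinh ((p+2)*y)) := by
    rw [Real.exp_add]; ring
  have eqarg : -(2*(p*y)) + (-y + -y) = -(p*y) + -((p+2)*y) := by ring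
  rw [eqL, eqR, eqarg]
  have hEpos : 0 < 4 * Real.exp (-(p*y) + -((p+2)*y)) := by positivity
  exact mul_lt_mul_of_pos_left key hEpos

lemma main_ineq (p ρ : ℝ) (hp : 0 < p) (hρ0 : 0 ≤ ρ) (hρ1 : ρ < 1) :
    p * (p + 2) * (1 - ρ ^ (p + 1)) ^ 2 <
      (p + 1) ^ 2 * (1 - ρ ^ p) * (1 - ρ ^ (p + 2)) := by
  rcases eq_or_lt_of_le hρ0 with h0 | h0
  · simp only [← h0, Real.zero_rpow (by linarith : p + 1 ≠ 0),
      Real.zero_rpow hp.ne', Real.zero_rpow (by linarith : p + 2 ≠ 0)]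
    nlinarith
  · have key := aux_rho p ρ hp h0 hρ1
    have ha : ρ ^ (p + 1) = ρ ^ p * ρ := by
      rw [Real.rpow_add h0, Real.rpow_one]
    have hb : ρ ^ (p + 2) = ρ ^ p * ρ ^ 2 := by
      rw [Real.rpow_add h0, Real.rpow_two]
    rw [ha]
    rw [hb] at key ⊢
    nlinarith [key]

/-- the limiting correlation coefficients lie strictly between 0 and 1:
`p(p+2)(1-ρ^{p+1})² < (p+1)²(1-ρ^p)(1-ρ^{p+2})`, the corresponding `α(ρ) ∈ (0,1)`, and
`Γ(p+1)²/(Γ(p)Γ(p+2)) = p/(p+1) ∈ (0,1)`. -/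
theorem stmt18 (p ρ : ℝ) (hp : 0 < p) (hρ0 : 0 ≤ ρ) (hρ1 : ρ < 1) :
    p * (p + 2) * (1 - ρ ^ (p + 1)) ^ 2 <
      (p + 1) ^ 2 * (1 - ρ ^ p) * (1 - ρ ^ (p + 2)) ∧
    (0 < Real.sqrt (p * (p + 2)) / (p + 1) *
        ((1 - ρ ^ (p + 1)) / Real.sqrt ((1 - ρ ^ p) * (1 - ρ ^ (p + 2)))) ∧
      Real.sqrt (p * (p + 2)) / (p + 1) *
        ((1 - ρ ^ (p + 1)) / Real.sqrt ((1 - ρ ^ p) * (1 - ρ ^ (p + 2)))) < 1) ∧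
    Real.Gamma (p + 1) ^ 2 / (Real.Gamma p * Real.Gamma (p + 2)) = p / (p + 1) ∧
    0 < p / (p + 1) ∧ p / (p + 1) < 1 := by
  have h1 := main_ineq p ρ hp hρ0 hρ1
  have hc : ρ ^ (p + 1) < 1 := by
    rcases eq_or_lt_of_le hρ0 with h0 | h0
    · rw [← h0, Real.zero_rpow (by linarith : p + 1 ≠ 0)]; norm_num
    · exact Real.rpow_lt_one hρ0 hρ1 (by linarith)
  have haa : ρ ^ p < 1 := by
    rcases eq_or_lt_of_le hρ0 with h0 | h0
    · rw [← h0, Real.zero_rpow hp.ne']; norm_num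
    · exact Real.rpow_lt_one hρ0 hρ1 hp
  have hbb : ρ ^ (p + 2) < 1 := by
    rcases eq_or_lt_of_le hρ0 with h0 | h0
    · rw [← h0, Real.zero_rpow (by linarith : p + 2 ≠ 0)]; norm_num
    · exact Real.rpow_lt_one hρ0 hρ1 (by linarith)
  have hD : 0 < (1 - ρ ^ p) * (1 - ρ ^ (p + 2)) := by
    apply mul_pos <;> linarith
  have hsqD : 0 < Real.sqrt ((1 - ρ ^ p) * (1 - ρ ^ (p + 2))) := Real.sqrt_pos.mpr hD
  have hsqP : 0 < Real.sqrt (p * (p + 2)) := Real.sqrt_pos.mpr (by nlinarith)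
  set α := Real.sqrt (p * (p + 2)) / (p + 1) *
      ((1 - ρ ^ (p + 1)) / Real.sqrt ((1 - ρ ^ p) * (1 - ρ ^ (p + 2)))) with hα
  have hαpos : 0 < α := by
    apply mul_pos (div_pos hsqP (by linarith))
    apply div_pos (by linarith) hsqD
  have hα1 : α < 1 := by
    have hsq : α ^ 2 < 1 := by
      have e : α ^ 2 = (p * (p + 2)) * (1 - ρ ^ (p + 1)) ^ 2 /
          ((p + 1) ^ 2 * ((1 - ρ ^ p) * (1 - ρ ^ (p + 2)))) := by
        rw [hα, mul_pow, div_pow, div_pow,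
          Real.sq_sqrt (by nlinarith : (0:ℝ) ≤ p * (p + 2)),
          Real.sq_sqrt hD.le]
        field_simp
      rw [e, div_lt_one (by positivity)]
      nlinarith [h1]
    nlinarith [hαpos, hsq]
  refine ⟨h1, ⟨hαpos, hα1⟩, ?_, div_pos hp (by linarith), (div_lt_one (by linarith)).mpr (by linarith)⟩
  have hΓp : 0 < Real.Gamma p := Real.Gamma_pos_of_pos hp
  have g1 : Real.Gamma (p + 1) = p * Real.Gamma p := Real.Gamma_add_one hp.ne'
  have g2 : Real.Gamma (p + 2) = (p + 1) * Real.Gamma (p + 1) := by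
    have := Real.Gamma_add_one (by linarith : p + 1 ≠ 0)
    rw [show p + 2 = p + 1 + 1 by ring, this]
  rw [g2, g1]
  field_simp
end
end
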